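/- arXiv:1501.04341 — 7 statements merged into one kernel-verified Lean document; each statement's English description precedes it below -/
import Mathlib

section
/- Let K be a nonempty compact subset of ℂ whose complement ℂ \ K is connected. For every closed subset S ⊆ K, the following are equivalent: (i) for every f ∈ A(K) there exists s ∈ S with |f(s)| = sup_{z ∈ K} |f(z)| (i.e., S is a boundary for A(K) in the Shilov sense); (ii) ∂K ⊆ S. In particular, ∂K is the smallest closed boundary for A(K) in the Shilov sense, i.e., the Shilov boundary of A(K) equals ∂K. -/
/-!
If `∂K ⊆ S`, the maximum modulus principle applied on `interior K` moves a maximum of `‖f‖` over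
the compact set `K` to a point of `∂K`, hence of `S`. Conversely, if a point `z ∈ ∂K` lies outside
the closed set `S`, pick `w ∉ K` so close to `z` that `w` is nearer to `z` than to every point of
`S`; then `(· - w)⁻¹` belongs to `A(K)` and `‖f z‖` exceeds every value of `‖f‖` on `S`.
-/

open Set Metric

theorem IsCompact.exists_mem_frontier_isMaxOn_norm {E F : Type*} [NormedAddCommGroup E]
    [NormedSpace ℂ E] [Nontrivial E] [NormedAddCommGroup F] [NormedSpace ℂ F] {K : Set E}
    (hK : IsCompact K) (hne : K.Nonempty) {f : E → F} (hc : ContinuousOn f K)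
    (hd : DifferentiableOn ℂ f (interior K)) :
    ∃ y ∈ frontier K, IsMaxOn (norm ∘ f) K y := by
  have hfrK : frontier K ⊆ K := hK.isClosed.frontier_subset
  obtain ⟨y, hy, hmax⟩ := (hK.of_isClosed_subset isClosed_frontier hfrK).exists_isMaxOn
    (nonempty_frontier_iff.2 ⟨hne, hK.ne_univ⟩) (hc.mono hfrK).norm
  refine ⟨y, hy, fun z hz => ?_⟩
  by_cases hzfr : z ∈ frontier K
  · exact hmax hzfr
  have hzint : z ∈ interior K := by
    rw [← hK.isClosed.closure_eq, closure_eq_interior_union_frontier] at hz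
    exact hz.resolve_right hzfr
  exact Complex.norm_le_of_forall_mem_frontier_norm_le (hK.isBounded.subset interior_subset)
    ⟨hd, hc.mono (closure_minimal interior_subset hK.isClosed)⟩
    (fun w hw => hmax (frontier_interior_subset hw)) (subset_closure hzint)

theorem IsMaxOn.csSup_image_eq {α β : Type*} [ConditionallyCompleteLinearOrder β] {f : α → β}
    {s : Set α} {a : α} (ha : a ∈ s) (h : IsMaxOn f s a) : sSup (f '' s) = f a :=
  sSup_image'.trans (h.iSup_eq ha)

theorem exists_mem_forall_dist_lt_dist_of_mem_closure {X : Type*} [PseudoMetricSpace X]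
    {S T : Set X} {z : X} (hS : IsClosed S) (hzS : z ∉ S) (hzT : z ∈ closure T) :
    ∃ w ∈ T, ∀ s ∈ S, dist z w < dist s w := by
  obtain ⟨d, hd, hdS⟩ := Metric.isOpen_iff.1 hS.isOpen_compl z hzS
  obtain ⟨w, hwT, hwz⟩ := Metric.mem_closure_iff.1 hzT (d / 2) (half_pos hd)
  refine ⟨w, hwT, fun s hs => ?_⟩
  have hsz : d ≤ dist s z := not_lt.1 fun h => hdS h hs
  linarith [dist_triangle s w z, dist_comm z w]

theorem frontier_subset_of_forall_exists_norm_eq_sSup {K S : Set ℂ} (hK : IsCompact K)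
    (hS : IsClosed S)
    (h : ∀ f : ℂ → ℂ, ContinuousOn f K → DifferentiableOn ℂ f (interior K) →
      ∃ s ∈ S, ‖f s‖ = sSup ((fun z => ‖f z‖) '' K)) :
    frontier K ⊆ S := by
  intro z hz
  by_contra hzS
  have hzK : z ∈ K := hK.isClosed.frontier_subset hz
  obtain ⟨w, hwK, hw⟩ := exists_mem_forall_dist_lt_dist_of_mem_closure hS hzS
    (frontier_subset_closure (s := Kᶜ) (by rwa [frontier_compl]))
  have hne : ∀ x ∈ K, x - w ≠ 0 := fun x hx h => hwK (sub_eq_zero.1 h ▸ hx)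
  have hc : ContinuousOn (fun x => (x - w)⁻¹) K :=
    (continuousOn_id.sub continuousOn_const).inv₀ hne
  obtain ⟨s, hs, hsup⟩ := h (fun x => (x - w)⁻¹) hc
    ((differentiableOn_id.sub_const w).inv fun x hx => hne x (interior_subset hx))
  have hzw : 0 < dist z w := dist_pos.2 fun h => hwK (h ▸ hzK)
  have hlt : ‖(s - w)⁻¹‖ < ‖(z - w)⁻¹‖ := by
    rw [norm_inv, norm_inv, ← dist_eq_norm, ← dist_eq_norm]
    exact inv_strictAnti₀ hzw (hw s hs)
  exact hlt.not_ge (hsup ▸ le_csSup (hK.bddAbove_image hc.norm) (mem_image_of_mem _ hzK))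

theorem shilov_boundary_eq_frontier_general (K : Set ℂ) (hK : IsCompact K)
    (hKne : K.Nonempty)
    (S : Set ℂ) (hS : IsClosed S) :
    (∀ f : ℂ → ℂ, ContinuousOn f K → DifferentiableOn ℂ f (interior K) →
        ∃ s ∈ S, ‖f s‖ = sSup ((fun z => ‖f z‖) '' K))
      ↔ frontier K ⊆ S := by
  refine ⟨frontier_subset_of_forall_exists_norm_eq_sSup hK hS, fun hsub f hc hd => ?_⟩
  obtain ⟨y, hy, hmax⟩ := hK.exists_mem_frontier_isMaxOn_norm hKne hc hd
  exact ⟨y, hsub hy, (hmax.csSup_image_eq (hK.isClosed.frontier_subset hy)).symm⟩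

/-- For a nonempty compact `K ⊆ ℂ` with connected complement, a closed subset
`S ⊆ K` is a boundary for `A(K)` in the Shilov sense iff `∂K ⊆ S`; hence the
Shilov boundary of `A(K)` equals `∂K`. -/
theorem shilov_boundary_eq_frontier (K : Set ℂ) (hK : IsCompact K)
    (hKne : K.Nonempty) (hKc : IsConnected Kᶜ)
    (S : Set ℂ) (hS : IsClosed S) (hSK : S ⊆ K) :
    (∀ f : ℂ → ℂ, ContinuousOn f K → DifferentiableOn ℂ f (interior K) →
        ∃ s ∈ S, ‖f s‖ = sSup ((fun z => ‖f z‖) '' K))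
      ↔ frontier K ⊆ S :=
  shilov_boundary_eq_frontier_general K hK hKne S hS
end

section
/- Let K be a compact subset of ℂ whose complement ℂ \ K is connected, and let z ∈ K. The following are equivalent: (1) z ∈ ∂K; (2) z is a peak point for A(K); (3) z satisfies the Bishop 1/4–3/4 property: for every open set U ⊆ ℂ containing z there exists f ∈ A(K) such that sup_{w ∈ K} |f(w)| ≤ 1, f(z) is a real number greater than 3/4, and |f(w)| < 1/4 for all w ∈ K \ U. -/
/-!
Powers of a peak function give the 1/4–3/4 property, and maximum modulus puts every point with
that property on `∂K`. Conversely, let `z ∈ ∂K` and `s > 0`. Since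
`ℂ \ K` is connected, a path in it from near `z` to a far point, followed from its last visit to
the closed disc `B̄(z, s)`, is a continuum outside `B(z, s)` that starts at some `p` with
`|z - p| = s`. Along this cut `log (w - p)` continues holomorphically to `K ∪ B(z, s/4)`, which
yields a branch `φ` of `√((w - p) / (z - p))` with `φ z = 1`. Then `2 / (φ + 1)` is bounded on
`K`, close to `1` near `z` at scale `s`, and small beyond distance `1600 s`; a geometrically
weighted sum of these functions over the scales `10000⁻ᵏ` peaks at `z`.
-/

open Metric Set Complex

def IsPeakPoint (K : Set ℂ) (z : ℂ) : Prop :=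
  ∃ f : ℂ → ℂ, ContinuousOn f K ∧ DifferentiableOn ℂ f (interior K) ∧
    f z = 1 ∧ ∀ w ∈ K \ {z}, ‖f w‖ < 1

def HasBishopProperty (K : Set ℂ) (z : ℂ) : Prop :=
  ∀ U : Set ℂ, IsOpen U → z ∈ U →
    ∃ f : ℂ → ℂ, ContinuousOn f K ∧ DifferentiableOn ℂ f (interior K) ∧
      (∀ w ∈ K, ‖f w‖ ≤ 1) ∧ (∃ t : ℝ, f z = (t : ℂ) ∧ 3 / 4 < t) ∧ ∀ w ∈ K \ U, ‖f w‖ < 1 / 4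

lemma IsPeakPoint.hasBishopProperty {K : Set ℂ} (hK : IsCompact K) {z : ℂ} (h : IsPeakPoint K z) :
    HasBishopProperty K z := by
  obtain ⟨f, hfc, hfd, hfz, hlt⟩ := h
  have hle : ∀ w ∈ K, ‖f w‖ ≤ 1 := fun w hw => by
    rcases eq_or_ne w z with rfl | hwz
    · simp [hfz]
    · exact (hlt w ⟨hw, hwz⟩).le
  intro U hU hzU
  obtain ⟨n, hn⟩ : ∃ n : ℕ, ∀ w ∈ K \ U, ‖f w‖ ^ n < 1 / 4 := by
    rcases (K \ U).eq_empty_or_nonempty with hempty | hne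
    · exact ⟨0, by simp [hempty]⟩
    obtain ⟨w₀, hw₀, hmax⟩ := (hK.diff hU).exists_isMaxOn hne (hfc.mono sdiff_subset).norm
    obtain ⟨n, hn⟩ := exists_pow_lt_of_lt_one (by norm_num : (0 : ℝ) < 1 / 4)
      (hlt w₀ ⟨hw₀.1, fun h => hw₀.2 (h ▸ hzU)⟩)
    exact ⟨n, fun w hw => (pow_le_pow_left₀ (norm_nonneg _) (hmax hw) n).trans_lt hn⟩
  refine ⟨fun w => f w ^ n, hfc.pow n, hfd.pow n, fun w hw => ?_, ⟨1, by simp [hfz], by norm_num⟩,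
    fun w hw => ?_⟩
  · rw [norm_pow]
    exact pow_le_one₀ (norm_nonneg _) (hle w hw)
  · rw [norm_pow]
    exact hn w hw

lemma HasBishopProperty.mem_frontier {K : Set ℂ} (hK : IsCompact K) {z : ℂ} (hz : z ∈ K)
    (h : HasBishopProperty K z) : z ∈ frontier K := by
  rw [hK.isClosed.frontier_eq]
  refine ⟨hz, fun hzi => ?_⟩
  obtain ⟨f, hfc, hfd, -, ⟨t, hft, ht⟩, hsmall⟩ := h (interior K) isOpen_interior hzi
  have hcl : closure (interior K) ⊆ K := closure_minimal interior_subset hK.isClosed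
  have hmax : ‖f z‖ ≤ 1 / 4 := norm_le_of_forall_mem_frontier_norm_le
    (hK.isBounded.subset interior_subset) ⟨hfd, hfc.mono hcl⟩
    (fun w hw => by
      rw [isOpen_interior.frontier_eq] at hw
      exact (hsmall w ⟨hcl hw.1, hw.2⟩).le)
    (subset_closure hzi)
  rw [hft, norm_real, Real.norm_eq_abs] at hmax
  linarith [le_abs_self t]

def HasLogBranch (V : Set ℂ) (a : ℂ) : Prop :=
  ∃ L : ℂ → ℂ, DifferentiableOn ℂ L V ∧ ∀ w ∈ V, exp (L w) = w - a

lemma hasLogBranch_of_sub_mem_slitPlane {V : Set ℂ} {a : ℂ} (h : ∀ w ∈ V, w - a ∈ slitPlane) :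
    HasLogBranch V a :=
  ⟨fun w => log (w - a),
    fun w hw => ((differentiableAt_id.sub_const a).clog (h w hw)).differentiableWithinAt,
    fun w hw => exp_log (slitPlane_ne_zero (h w hw))⟩

/-- `log (w - a) = log (w - b) + log (1 + (b - a) / (w - b))`, the last term being principal. -/
lemma HasLogBranch.of_norm_sub_lt {V : Set ℂ} {a b : ℂ} (hb : HasLogBranch V b)
    (hab : ∀ w ∈ V, ‖a - b‖ < ‖w - b‖) : HasLogBranch V a := by
  obtain ⟨L, hLd, hL⟩ := hb
  have hwb : ∀ w ∈ V, w - b ≠ 0 := fun w hw => norm_pos_iff.1 ((norm_nonneg _).trans_lt (hab w hw))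
  have hmem : ∀ w ∈ V, 1 + (b - a) / (w - b) ∈ slitPlane := fun w hw =>
    mem_slitPlane_of_norm_lt_one <| by
      rw [norm_div, norm_sub_rev, div_lt_one (norm_pos_iff.2 (hwb w hw))]
      exact hab w hw
  refine ⟨fun w => L w + log (1 + (b - a) / (w - b)), fun w hw => ?_, fun w hw => ?_⟩
  · refine (hLd w hw).add (DifferentiableAt.differentiableWithinAt ?_)
    exact ((differentiableAt_const _).add ((differentiableAt_const _).div
      (differentiableAt_id.sub_const b) (hwb w hw))).clog (hmem w hw)
  · rw [exp_add, hL w hw, exp_log (slitPlane_ne_zero (hmem w hw))]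
    field_simp [hwb w hw]
    ring

lemma IsPreconnected.hasLogBranch_iff {V A : Set ℂ} (hA : IsPreconnected A) {ε : ℝ} (hε : 0 < ε)
    (hVA : ∀ w ∈ V, ∀ b ∈ A, ε ≤ dist w b) {a b : ℂ} (ha : a ∈ A) (hb : b ∈ A) :
    HasLogBranch V a ↔ HasLogBranch V b := by
  refine hA.induction₂' (fun x y => HasLogBranch V x ↔ HasLogBranch V y) (fun x hx => ?_)
    (fun _ _ _ _ _ _ => Iff.trans) ha hb
  filter_upwards [inter_mem_nhdsWithin A (ball_mem_nhds x hε), self_mem_nhdsWithin]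
    with y hy hyA
  have hxy : dist y x < ε := hy.2
  have h : HasLogBranch V x ↔ HasLogBranch V y :=
    ⟨fun hx' => hx'.of_norm_sub_lt fun w hw => ?_, fun hy' => hy'.of_norm_sub_lt fun w hw => ?_⟩
  · exact ⟨h, h.symm⟩
  · rw [← dist_eq_norm, ← dist_eq_norm]; exact hxy.trans_le (hVA w hw x hx)
  · rw [← dist_eq_norm, ← dist_eq_norm, dist_comm]; exact hxy.trans_le (hVA w hw y hyA)

lemma exists_last_eq_of_le {f : ℝ → ℝ} {a b c : ℝ} (hab : a ≤ b) (hf : ContinuousOn f (Icc a b))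
    (ha : f a ≤ c) (hb : c ≤ f b) : ∃ t ∈ Icc a b, f t = c ∧ ∀ u ∈ Icc t b, c ≤ f u := by
  set S := Icc a b ∩ f ⁻¹' {c}
  have hS : IsCompact S :=
    isCompact_Icc.of_isClosed_subset
      (hf.preimage_isClosed_of_isClosed isClosed_Icc isClosed_singleton) inter_subset_left
  obtain ⟨t₁, ht₁, hft₁⟩ := intermediate_value_Icc hab hf ⟨ha, hb⟩
  obtain ⟨ht, hft⟩ := hS.sSup_mem ⟨t₁, ht₁, hft₁⟩
  refine ⟨sSup S, ht, hft, fun u hu => le_of_not_gt fun hlt => ?_⟩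
  obtain ⟨v, hv, hfv⟩ := intermediate_value_Icc hu.2
    (hf.mono (Icc_subset_Icc (ht.1.trans hu.1) le_rfl)) ⟨hlt.le, hb⟩
  have hvS : v ≤ sSup S := le_csSup hS.bddAbove ⟨⟨ht.1.trans (hu.1.trans hv.1), hv.2⟩, hfv⟩
  have hvu : v = u := le_antisymm (hvS.trans hu.1) hv.1
  exact hlt.ne (hvu ▸ hfv)

lemma exists_isPreconnected_outside_ball {E : Type*} [NormedAddCommGroup E] [NormedSpace ℝ E]
    {K : Set E} (hK : IsClosed K) (hKc : IsConnected Kᶜ) {z q : E} {s : ℝ}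
    (hz : z ∈ closure Kᶜ) (hs : 0 < s) (hq : q ∈ Kᶜ) (hqz : s ≤ dist q z) :
    ∃ A ⊆ Kᶜ, IsCompact A ∧ IsPreconnected A ∧ q ∈ A ∧ (∀ x ∈ A, s ≤ dist x z) ∧
      ∃ p ∈ A, dist p z = s := by
  obtain ⟨p₀, hp₀, hp₀z⟩ := Metric.mem_closure_iff.1 hz s hs
  have hJ : JoinedIn Kᶜ p₀ q :=
    (hK.isOpen_compl.isConnected_iff_isPathConnected.1 hKc).joinedIn p₀ hp₀ q hq
  set γ := hJ.somePath
  have hγ : Continuous fun t => dist (γ.extend t) z := by fun_prop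
  obtain ⟨t₀, ht₀, hγt₀, hlast⟩ := exists_last_eq_of_le zero_le_one hγ.continuousOn
    (by simpa [dist_comm] using hp₀z.le) (by simpa using hqz)
  refine ⟨γ.extend '' Icc t₀ 1, ?_, isCompact_Icc.image γ.continuous_extend,
    isPreconnected_Icc.image _ γ.continuous_extend.continuousOn,
    ⟨1, ⟨ht₀.2, le_rfl⟩, γ.extend_one⟩, ?_, γ.extend t₀, mem_image_of_mem _ ⟨le_rfl, ht₀.2⟩, hγt₀⟩
  · rintro _ ⟨t, -, rfl⟩
    exact hJ.somePath_mem _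
  · rintro _ ⟨t, ht, rfl⟩
    exact hlast t ht

/-- The branch cut runs from `p` to a far point through `Kᶜ`, staying outside `ball z s`. -/
lemma exists_hasLogBranch_union_ball {K : Set ℂ} (hK : IsCompact K) (hKc : IsConnected Kᶜ)
    {z : ℂ} (hz : z ∈ closure Kᶜ) {s : ℝ} (hs : 0 < s) :
    ∃ p, ‖z - p‖ = s ∧ HasLogBranch (K ∪ ball z (s / 4)) p := by
  obtain ⟨R, hR⟩ := (hK.isBounded.union (isBounded_ball (x := z) (r := 2 * s))).subset_ball 0
  have hq : -(R : ℂ) ∉ K ∪ ball z (2 * s) := fun h => by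
    simpa using (mem_ball_zero_iff.1 (hR h)).trans_le (le_abs_self R)
  obtain ⟨A, hAK, hAc, hAp, hqA, hAz, p, hpA, hpz⟩ :=
    exists_isPreconnected_outside_ball hK.isClosed hKc hz hs (fun h => hq (.inl h))
      (by linarith [not_lt.1 fun h => hq (.inr (mem_ball.2 h))])
  obtain ⟨δ, hδ, hδK⟩ := hAc.exists_cthickening_subset_open hK.isClosed.isOpen_compl hAK
  set V := K ∪ ball z (s / 4)
  have hVA : ∀ w ∈ V, ∀ b ∈ A, min δ (s / 2) ≤ dist w b := by
    rintro w (hw | hw) b hb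
    · exact (min_le_left _ _).trans
        (le_of_not_gt fun h => hδK (mem_cthickening_of_dist_le w b δ A hb h.le) hw)
    · have hbw := dist_triangle b w z
      have hbz := hAz b hb
      have hwz : dist w z < s / 4 := hw
      exact (min_le_right _ _).trans (by rw [dist_comm]; linarith)
  have hVR : ∀ w ∈ V, w - -(R : ℂ) ∈ slitPlane := fun w hw => by
    have h1 := mem_ball_zero_iff.1 (hR (union_subset_union_right K
      (ball_subset_ball (by linarith)) hw))
    have h2 := neg_le_of_abs_le (abs_re_le_norm w)
    exact mem_slitPlane_iff.2 (.inl (by simp; linarith))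
  refine ⟨p, by rw [← dist_eq_norm, dist_comm, hpz], ?_⟩
  exact (hAp.hasLogBranch_iff (lt_min hδ (half_pos hs)) hVA hpA hqA).2
    (hasLogBranch_of_sub_mem_slitPlane hVR)

/-- The constants are those attained by `2 / (φ + 1)` in `isBumpAtScale_two_div_add_one`; they are
tuned to the weights and scales of `tsum_weight_mul_lt_one`. -/
structure IsBumpAtScale (K : Set ℂ) (z : ℂ) (s : ℝ) (g : ℂ → ℂ) : Prop where
  continuousOn : ContinuousOn g K
  differentiableOn : DifferentiableOn ℂ g (interior K)
  apply_self : g z = 1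
  norm_le : ∀ w ∈ K, ‖g w‖ ≤ 18
  norm_le_of_near : ∀ w ∈ K, 4 * ‖w - z‖ < s → ‖g w‖ ≤ 1 + ‖w - z‖ / s
  norm_le_of_far : ∀ w ∈ K, 1600 * s ≤ ‖w - z‖ → ‖g w‖ ≤ 1 / 19

lemma norm_sub_one_mul_norm_add_one {u w z p : ℂ} (h : u ^ 2 * (z - p) = w - p) :
    ‖u - 1‖ * ‖u + 1‖ * ‖z - p‖ = ‖w - z‖ := by
  rw [← norm_mul, ← norm_mul]
  congr 1
  linear_combination h

lemma two_le_norm_sub_one_add_norm_add_one (u : ℂ) : 2 ≤ ‖u - 1‖ + ‖u + 1‖ := by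
  have := norm_sub_le (u + 1) (u - 1)
  rw [show u + 1 - (u - 1) = 2 by ring, Complex.norm_two] at this
  linarith

/-- `‖φ - 1‖ = 1 / 2` would force `‖φ - 1‖ * ‖φ + 1‖ ≥ 3 / 4`, so by connectedness `‖φ - 1‖` never
reaches `1 / 2`. -/
lemma IsPreconnected.norm_sub_one_lt_half {S : Set ℂ} (hS : IsPreconnected S) {φ : ℂ → ℂ}
    (hφ : ContinuousOn φ S) {z : ℂ} (hz : z ∈ S) (hφz : φ z = 1)
    (h : ∀ w ∈ S, ‖φ w - 1‖ * ‖φ w + 1‖ < 1 / 4) {w : ℂ} (hw : w ∈ S) : ‖φ w - 1‖ < 1 / 2 := by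
  by_contra! hle
  obtain ⟨v, hv, hv2⟩ := hS.intermediate_value hz hw (by fun_prop : ContinuousOn (‖φ · - 1‖) S)
    ⟨by simp [hφz], hle⟩
  have := h v hv
  have := two_le_norm_sub_one_add_norm_add_one (φ v)
  simp only at hv2
  nlinarith

lemma one_ninth_le_norm_add_one {u : ℂ} (h : ‖u - 1‖ < 1 / 2 ∨ 1 / 4 ≤ ‖u - 1‖ * ‖u + 1‖) :
    1 / 9 ≤ ‖u + 1‖ := by
  by_contra! hlt
  have h1 : ‖u - 1‖ ≤ ‖u + 1‖ + 2 := by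
    simpa [show u - 1 = u + 1 - 2 by ring] using norm_sub_le (u + 1) 2
  rcases h with h | h
  · linarith [two_le_norm_sub_one_add_norm_add_one u]
  · nlinarith [norm_nonneg (u + 1), norm_nonneg (u - 1)]

lemma norm_two_div_add_one_le_one_add {u : ℂ} (h : ‖u - 1‖ < 1 / 2) :
    ‖2 / (u + 1)‖ ≤ 1 + ‖u - 1‖ * ‖u + 1‖ := by
  have hy : 1 ≤ ‖u + 1‖ := by linarith [two_le_norm_sub_one_add_norm_add_one u]
  calc ‖2 / (u + 1)‖ = ‖1 - (u - 1) / (u + 1)‖ := by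
        rw [one_sub_div (norm_pos_iff.1 (one_pos.trans_le hy))]
        ring_nf
    _ ≤ 1 + ‖u - 1‖ / ‖u + 1‖ := by simpa [norm_div] using norm_sub_le 1 ((u - 1) / (u + 1))
    _ ≤ 1 + ‖u - 1‖ * ‖u + 1‖ := by
        gcongr
        exact (div_le_self (norm_nonneg _) hy).trans (le_mul_of_one_le_right (norm_nonneg _) hy)

lemma norm_two_div_add_one_le_of_le_norm {u : ℂ} (h : 39 ≤ ‖u‖) : ‖2 / (u + 1)‖ ≤ 1 / 19 := by
  have h1 := norm_sub_le (u + 1) 1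
  rw [add_sub_cancel_right, norm_one] at h1
  rw [norm_div, Complex.norm_two, div_le_iff₀ (by linarith)]
  linarith

lemma isBumpAtScale_two_div_add_one {K V : Set ℂ} {φ : ℂ → ℂ} {z p : ℂ} {s : ℝ} (hs : 0 < s)
    (hKV : K ⊆ V) (hBV : ball z (s / 4) ⊆ V) (hφ : DifferentiableOn ℂ φ V) (hφz : φ z = 1)
    (hsq : ∀ w ∈ V, φ w ^ 2 * (z - p) = w - p) (hzp : ‖z - p‖ = s) :
    IsBumpAtScale K z s (fun w => 2 / (φ w + 1)) := by
  have hprod : ∀ w ∈ V, ‖φ w - 1‖ * ‖φ w + 1‖ = ‖w - z‖ / s := fun w hw => by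
    rw [eq_div_iff hs.ne', ← hzp, norm_sub_one_mul_norm_add_one (hsq w hw)]
  have hball : ∀ w ∈ K, 4 * ‖w - z‖ < s → ‖φ w - 1‖ < 1 / 2 := fun w hw hwz =>
    (convex_ball z (s / 4)).isPreconnected.norm_sub_one_lt_half (hφ.continuousOn.mono hBV)
      (mem_ball_self (by positivity)) hφz (fun v hv => by
        rw [hprod v (hBV hv), div_lt_iff₀ hs]
        linarith [mem_ball_iff_norm.1 hv]) (mem_ball_iff_norm.2 (by linarith))
  have hden : ∀ w ∈ K, 1 / 9 ≤ ‖φ w + 1‖ := fun w hw => one_ninth_le_norm_add_one <| by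
    rcases lt_or_ge (4 * ‖w - z‖) s with hwz | hwz
    · exact .inl (hball w hw hwz)
    · exact .inr (by rw [hprod w (hKV hw), le_div_iff₀ hs]; linarith)
  have hden0 : ∀ w ∈ K, φ w + 1 ≠ 0 := fun w hw h => by
    have := hden w hw
    rw [h, norm_zero] at this
    norm_num at this
  refine ⟨continuousOn_const.div ((hφ.continuousOn.mono hKV).add continuousOn_const) hden0,
    (differentiableOn_const _).div ((hφ.mono (interior_subset.trans hKV)).add
      (differentiableOn_const _)) fun w hw => hden0 w (interior_subset hw),
    by norm_num [hφz], fun w hw => ?_, fun w hw hnear => ?_, fun w hw hfar => ?_⟩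
  · rw [norm_div, Complex.norm_two, div_le_iff₀ (by linarith [hden w hw])]
    linarith [hden w hw]
  · rw [← hprod w (hKV hw)]
    exact norm_two_div_add_one_le_one_add (hball w hw hnear)
  · have hsq' : ‖φ w‖ ^ 2 * s = ‖w - p‖ := by
      rw [← hzp, ← norm_pow, ← norm_mul, hsq w (hKV hw)]
    have hwp : ‖w - z‖ ≤ ‖w - p‖ + s := by
      rw [← hzp, norm_sub_rev z p]
      exact norm_sub_le_norm_sub_add_norm_sub w p z
    have hφ2 : 1599 ≤ ‖φ w‖ ^ 2 := le_of_mul_le_mul_right (by linarith) hs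
    exact norm_two_div_add_one_le_of_le_norm (by nlinarith [norm_nonneg (φ w)])

lemma exists_isBumpAtScale {K : Set ℂ} (hK : IsCompact K) (hKc : IsConnected Kᶜ) {z : ℂ}
    (hz : z ∈ closure Kᶜ) {s : ℝ} (hs : 0 < s) : ∃ g, IsBumpAtScale K z s g := by
  obtain ⟨p, hzp, L, hLd, hL⟩ := exists_hasLogBranch_union_ball hK hKc hz hs
  have hzV : z ∈ K ∪ ball z (s / 4) := .inr (mem_ball_self (by positivity))
  refine ⟨_, isBumpAtScale_two_div_add_one (φ := fun w => exp ((L w - L z) / 2)) hs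
    subset_union_left subset_union_right ((hLd.sub_const _).div_const 2).cexp (by simp)
    (fun w hw => ?_) hzp⟩
  rw [← exp_nat_mul, ← hL z hzV, ← exp_add]
  push_cast
  rw [mul_div_cancel₀ _ two_ne_zero, sub_add_cancel, hL w hw]

lemma exists_first_pow_le {r ε : ℝ} (hε : 0 < ε) (hr : r < 1) :
    ∃ ν : ℕ, r ^ ν ≤ ε ∧ ∀ k < ν, ε < r ^ k := by
  classical
  have h : ∃ n : ℕ, r ^ n ≤ ε := ((exists_pow_lt_of_lt_one hε hr).imp fun _ => le_of_lt)
  exact ⟨Nat.find h, Nat.find_spec h, fun k hk => not_le.1 (Nat.find_min h hk)⟩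

lemma sum_range_weight_mul_le {ρ : ℝ} {ν : ℕ} (hρ : 0 ≤ ρ) (h : ∀ k < ν, 4 * ρ < 10000⁻¹ ^ k) :
    ∑ k ∈ Finset.range ν, 1 / 50 * (49 / 50 : ℝ) ^ k * (ρ / 10000⁻¹ ^ k) ≤
      50 / 9799 * (49 / 50) ^ ν := by
  rcases ν with _ | m
  · norm_num
  have hm : ρ * 10000 ^ m < 1 / 4 := by
    have := mul_lt_mul_of_pos_right (h m m.lt_succ_self) (by positivity : (0 : ℝ) < 10000 ^ m)
    rw [inv_pow, inv_mul_cancel₀ (by positivity)] at this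
    linarith
  have hterm : ∀ k, 1 / 50 * (49 / 50 : ℝ) ^ k * (ρ / 10000⁻¹ ^ k) = ρ / 50 * 9800 ^ k :=
    fun k => by
      rw [inv_pow, div_inv_eq_mul, show (9800 : ℝ) = 49 / 50 * 10000 by norm_num, mul_pow]
      ring
  simp only [hterm, ← Finset.mul_sum, geom_sum_eq (show (9800 : ℝ) ≠ 1 by norm_num)]
  have h9800 : (9800 : ℝ) ^ (m + 1) = 9800 * ((49 / 50) ^ m * 10000 ^ m) := by
    rw [← mul_pow]; ring
  rw [h9800, pow_succ]
  nlinarith [pow_pos (show (0 : ℝ) < 49 / 50 by norm_num) m]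

lemma summable_weight : Summable fun k : ℕ => 1 / 50 * (49 / 50 : ℝ) ^ k :=
  (summable_geometric_of_lt_one (by norm_num) (by norm_num)).mul_left _

lemma tsum_weight : ∑' k : ℕ, 1 / 50 * (49 / 50 : ℝ) ^ k = 1 := by
  rw [tsum_mul_left, tsum_geometric_of_lt_one (by norm_num) (by norm_num)]
  norm_num

/-- Up to the first scale below `4 ρ` the terms exceed `1` by a geometrically negligible amount,
the next two are merely bounded, and all later ones are small. -/
lemma tsum_weight_mul_lt_one {x : ℕ → ℝ} {ρ : ℝ} (hρ : 0 < ρ) (hx : ∀ k, 0 ≤ x k)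
    (h18 : ∀ k, x k ≤ 18) (hnear : ∀ k, 4 * ρ < 10000⁻¹ ^ k → x k ≤ 1 + ρ / 10000⁻¹ ^ k)
    (hfar : ∀ k, 1600 * 10000⁻¹ ^ k ≤ ρ → x k ≤ 1 / 19) :
    ∑' k, 1 / 50 * (49 / 50 : ℝ) ^ k * x k < 1 := by
  obtain ⟨ν, hν, hbefore⟩ := exists_first_pow_le (by positivity : 0 < 4 * ρ)
    (by norm_num : (10000 : ℝ)⁻¹ < 1)
  set c : ℕ → ℝ := fun k => 1 / 50 * (49 / 50) ^ k
  have hc : ∀ k, 0 ≤ c k := fun k => by positivity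
  have hsum : Summable fun k => c k * x k :=
    (summable_weight.mul_right 18).of_nonneg_of_le (fun k => mul_nonneg (hc k) (hx k))
      fun k => mul_le_mul_of_nonneg_left (h18 k) (hc k)
  have hhead : ∑ k ∈ Finset.range (ν + 2), c k * x k ≤
      (1 - (49 / 50) ^ ν) + 50 / 9799 * (49 / 50) ^ ν + 18 * (c ν + c (ν + 1)) := by
    have hgeom : ∑ k ∈ Finset.range ν, c k = 1 - (49 / 50) ^ ν := by
      simp only [c, ← Finset.mul_sum, geom_sum_eq (show (49 / 50 : ℝ) ≠ 1 by norm_num)]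
      ring
    have hnear' : ∑ k ∈ Finset.range ν, c k * x k ≤
        ∑ k ∈ Finset.range ν, (c k + c k * (ρ / 10000⁻¹ ^ k)) :=
      Finset.sum_le_sum fun k hk => by
        rw [← mul_one_add]
        exact mul_le_mul_of_nonneg_left (hnear k (hbefore k (Finset.mem_range.1 hk))) (hc k)
    rw [Finset.sum_add_distrib, hgeom] at hnear'
    rw [Finset.sum_range_succ, Finset.sum_range_succ]
    nlinarith [sum_range_weight_mul_le hρ.le hbefore, mul_le_mul_of_nonneg_left (h18 ν) (hc ν),
      mul_le_mul_of_nonneg_left (h18 (ν + 1)) (hc (ν + 1))]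
  have htail : ∑' i, c (i + (ν + 2)) * x (i + (ν + 2)) ≤ (49 / 50) ^ (ν + 2) / 19 := by
    have hshift : ∀ i, c (i + (ν + 2)) = (49 / 50) ^ (ν + 2) * c i := fun i => by
      simp only [c, pow_add]
      ring
    have hfar' : ∀ i, 1600 * 10000⁻¹ ^ (i + (ν + 2)) ≤ ρ := fun i => by
      have : (10000 : ℝ)⁻¹ ^ (i + (ν + 2)) ≤ 10000⁻¹ ^ ν * 10000⁻¹ ^ 2 := by
        rw [← pow_add]
        exact pow_le_pow_of_le_one (by norm_num) (by norm_num) (by omega)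
      norm_num at this
      linarith
    calc ∑' i, c (i + (ν + 2)) * x (i + (ν + 2)) ≤ ∑' i, (49 / 50) ^ (ν + 2) / 19 * c i :=
          (summable_nat_add_iff (ν + 2) |>.2 hsum).tsum_le_tsum (fun i => by
            rw [hshift]
            have := mul_le_mul_of_nonneg_left (hfar _ (hfar' i))
              (mul_nonneg (by positivity : (0 : ℝ) ≤ (49 / 50) ^ (ν + 2)) (hc i))
            linarith)
            (summable_weight.mul_left _)
      _ = (49 / 50) ^ (ν + 2) / 19 := by rw [tsum_mul_left, tsum_weight, mul_one]
  rw [← hsum.sum_add_tsum_nat_add (ν + 2)]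
  have hcν : c ν + c (ν + 1) = 99 / 2500 * (49 / 50) ^ ν := by
    simp only [c, pow_succ]
    ring
  rw [pow_add] at htail
  nlinarith [pow_pos (show (0 : ℝ) < 49 / 50 by norm_num) ν]

lemma isPeakPoint_tsum_of_isBumpAtScale {K : Set ℂ} {z : ℂ} {g : ℕ → ℂ → ℂ}
    (hg : ∀ k, IsBumpAtScale K z (10000⁻¹ ^ k) (g k)) : IsPeakPoint K z := by
  set c : ℕ → ℝ := fun k => 1 / 50 * (49 / 50) ^ k
  have hc : ∀ k, 0 ≤ c k := fun k => by positivity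
  have hnorm : ∀ k w, ‖(c k : ℂ) * g k w‖ = c k * ‖g k w‖ := fun k w => by
    rw [norm_mul, norm_real, Real.norm_of_nonneg (hc k)]
  have hle : ∀ k, ∀ w ∈ K, ‖(c k : ℂ) * g k w‖ ≤ c k * 18 := fun k w hw => by
    rw [hnorm]
    exact mul_le_mul_of_nonneg_left ((hg k).norm_le w hw) (hc k)
  refine ⟨fun w => ∑' k, (c k : ℂ) * g k w,
    continuousOn_tsum (fun k => continuousOn_const.mul (hg k).continuousOn)
      (summable_weight.mul_right 18) fun k w hw => hle k w hw,
    differentiableOn_tsum_of_summable_norm (summable_weight.mul_right 18)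
      (fun k => (differentiableOn_const _).mul (hg k).differentiableOn) isOpen_interior
      fun k w hw => hle k w (interior_subset hw), ?_, fun w ⟨hwK, hwz⟩ => ?_⟩
  · simp only [(hg _).apply_self, mul_one, ← ofReal_tsum, c, tsum_weight, ofReal_one]
  · have hρ : 0 < ‖w - z‖ := norm_pos_iff.2 (sub_ne_zero.2 hwz)
    have hsum : Summable fun k => ‖(c k : ℂ) * g k w‖ :=
      (summable_weight.mul_right 18).of_nonneg_of_le (fun k => norm_nonneg _) fun k => hle k w hwK
    calc ‖∑' k, (c k : ℂ) * g k w‖ ≤ ∑' k, ‖(c k : ℂ) * g k w‖ := norm_tsum_le_tsum_norm hsum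
      _ = ∑' k, c k * ‖g k w‖ := by simp only [hnorm]
      _ < 1 := tsum_weight_mul_lt_one hρ (fun k => norm_nonneg _) (fun k => (hg k).norm_le w hwK)
          (fun k h => (hg k).norm_le_of_near w hwK h) (fun k h => (hg k).norm_le_of_far w hwK h)

lemma isPeakPoint_of_mem_closure_compl {K : Set ℂ} (hK : IsCompact K) (hKc : IsConnected Kᶜ)
    {z : ℂ} (hz : z ∈ closure Kᶜ) : IsPeakPoint K z := by
  choose g hg using fun k : ℕ =>
    exists_isBumpAtScale hK hKc hz (by positivity : (0 : ℝ) < 10000⁻¹ ^ k)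
  exact isPeakPoint_tsum_of_isBumpAtScale hg

/-- For `z ∈ K`: `z ∈ ∂K` iff `z` is a peak point for `A(K)` iff `z` satisfies
the Bishop 1/4–3/4 property. -/
theorem frontier_iff_peak_iff_bishop (K : Set ℂ) (hK : IsCompact K)
    (hKc : IsConnected Kᶜ) (z : ℂ) (hz : z ∈ K) :
    ((z ∈ frontier K) ↔
      (∃ f : ℂ → ℂ, ContinuousOn f K ∧ DifferentiableOn ℂ f (interior K) ∧
        f z = 1 ∧ ∀ w ∈ K \ {z}, ‖f w‖ < 1)) ∧
    ((z ∈ frontier K) ↔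
      (∀ U : Set ℂ, IsOpen U → z ∈ U →
        ∃ f : ℂ → ℂ, ContinuousOn f K ∧ DifferentiableOn ℂ f (interior K) ∧
          (∀ w ∈ K, ‖f w‖ ≤ 1) ∧
          (∃ t : ℝ, f z = (t : ℂ) ∧ 3 / 4 < t) ∧
          ∀ w ∈ K \ U, ‖f w‖ < 1 / 4)) := by
  have hpeak : z ∈ frontier K → IsPeakPoint K z := fun h =>
    isPeakPoint_of_mem_closure_compl hK hKc (frontier_subset_closure (frontier_compl K ▸ h))
  have hbishop : HasBishopProperty K z → z ∈ frontier K := fun h => h.mem_frontier hK hz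
  exact ⟨⟨hpeak, fun h => hbishop (IsPeakPoint.hasBishopProperty hK h)⟩,
    ⟨fun h => (hpeak h).hasBishopProperty hK, hbishop⟩⟩
end

section
/- Let K be a compact subset of ℂ with ℂ \ K connected and with nonempty interior, and let z₁ and z₂ be two distinct points of ∂K, each of which is a type I boundary point and circularly accessible. Then there exists a kissing path with respect to z₁ and z₂: an injective continuous map Γ from the unit circle {w ∈ ℂ : |w| = 1} into ℂ such that z₁ and z₂ belong to the image of Γ, the image of Γ meets K exactly in {z₁, z₂}, and every bounded connected component of ℂ \ (image of Γ) is disjoint from K. -/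
/-!
Type I points cannot lie inside the kissing disks, so `z₁` and `z₂` lie on their boundary
circles and the centres `c₁`, `c₂` are outside `K`. Since `ℂ \ K` is connected, some
homeomorphism of the plane fixing `K` moves `c₁` to `c₂` (every point of an open set can be
pushed to any nearby point by a homeomorphism supported in a small ball); it carries the first
disk to a topological disk `M` with `M ∩ K = {z₁}` and `c₂ ∈ M`. Let `x₀` be the point of `M`
on the radius `[c₂, z₂]` closest to `z₂`. The map `pinch x₀ z₂` collapses `[x₀, z₂]` to `z₂`,
is injective elsewhere and only moves points of the ball of radius `|z₂ - x₀|` about `x₀`, which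
lies in the second disk. So it maps `∂M` to a Jordan curve meeting `K` exactly in `{z₁, z₂}`.
The complement of the image of `M` is the image of the complement of `M ∪ [x₀, z₂]`, which is
connected, and it is unbounded; hence every bounded component of the complement of the curve
lies in the image of `M`, whose only points of `K` are `z₁` and `z₂`.
-/

open Metric Set Function

noncomputable section

namespace KissingPath

section Drag

variable {E : Type*} [NormedAddCommGroup E]

def tent (m : E) (R : ℝ) (x : E) : ℝ := max (1 - ‖x - m‖ / R) 0

lemma tent_nonneg (m : E) (R : ℝ) (x : E) : 0 ≤ tent m R x := le_max_right _ _

lemma tent_self (m : E) (R : ℝ) : tent m R m = 1 := by simp [tent]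

lemma tent_eq_zero {m x : E} {R : ℝ} (hR : 0 < R) (hx : R ≤ ‖x - m‖) : tent m R x = 0 :=
  max_eq_right (by rw [sub_nonpos, one_le_div hR]; exact hx)

lemma tent_eq_of_le {m x : E} {R : ℝ} (hR : 0 < R) (hx : ‖x - m‖ ≤ R) :
    tent m R x = 1 - ‖x - m‖ / R :=
  max_eq_left (by rw [sub_nonneg, div_le_one hR]; exact hx)

lemma abs_tent_sub_tent_le (m : E) {R : ℝ} (hR : 0 < R) (x y : E) :
    |tent m R x - tent m R y| ≤ ‖x - y‖ / R := by
  refine (abs_max_sub_max_le_abs _ _ _).trans ?_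
  rw [sub_sub_sub_cancel_left, ← sub_div, abs_div, abs_of_pos hR]
  gcongr
  simpa [abs_sub_comm] using abs_norm_sub_norm_le (x - m) (y - m)

variable [NormedSpace ℝ E]

def drag (m : E) (R : ℝ) (a : E) (x : E) : E := x + tent m R x • a

lemma continuous_drag (m : E) (R : ℝ) (a : E) : Continuous (drag m R a) := by
  unfold drag tent
  fun_prop

lemma drag_self (m : E) (R : ℝ) (a : E) : drag m R a m = m + a := by
  simp [drag, tent_self]

lemma drag_eq_self {m x : E} {R : ℝ} (hR : 0 < R) (a : E) (hx : R ≤ ‖x - m‖) :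
    drag m R a x = x := by
  simp [drag, tent_eq_zero hR hx]

lemma drag_mem_closedBall {m x : E} {R : ℝ} {a : E} (hR : 0 < R) (ha : ‖a‖ ≤ R)
    (hx : x ∈ closedBall m R) : drag m R a x ∈ closedBall m R := by
  rw [mem_closedBall, dist_eq_norm] at hx ⊢
  calc ‖drag m R a x - m‖ = ‖(x - m) + tent m R x • a‖ := by rw [drag, add_sub_right_comm]
    _ ≤ ‖x - m‖ + tent m R x * ‖a‖ := by
        grw [norm_add_le, norm_smul, Real.norm_of_nonneg (tent_nonneg m R x)]
    _ ≤ ‖x - m‖ + (1 - ‖x - m‖ / R) * R := by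
        rw [tent_eq_of_le hR hx]
        gcongr
        exact sub_nonneg.2 ((div_le_one hR).2 hx)
    _ = R := by field_simp; ring

lemma image_drag_subset {R : ℝ} {a : E} (m : E) (hR : 0 < R) (ha : ‖a‖ ≤ R) (s : Set E) :
    drag m R a '' s ⊆ s ∪ closedBall m R := by
  rintro _ ⟨x, hx, rfl⟩
  by_cases hxm : x ∈ closedBall m R
  · exact Or.inr (drag_mem_closedBall hR ha hxm)
  · rw [mem_closedBall, dist_eq_norm, not_le] at hxm
    exact Or.inl (by rwa [drag_eq_self hR a hxm.le])

lemma drag_surjective (m a : E) {R : ℝ} (hR : 0 < R) : Surjective (drag m R a) := by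
  intro w
  rcases le_or_gt R ‖w - m‖ with hw | hw
  · exact ⟨w, drag_eq_self hR a hw⟩
  -- the preimage is `w - (1 - s) • a` for a zero `s` of `g`
  set g : ℝ → ℝ := fun s => ‖w - m - (1 - s) • a‖ - s * R
  have hg : ContinuousOn g (Icc 0 1) := by fun_prop
  obtain ⟨s, hs, hgs⟩ := intermediate_value_Icc' zero_le_one hg
    (show (0 : ℝ) ∈ Icc (g 1) (g 0) from ⟨by simp [g]; linarith, by simp [g]⟩)
  have hnorm : ‖w - (1 - s) • a - m‖ = s * R := by
    rw [sub_right_comm]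
    simpa [g, sub_eq_zero] using hgs
  refine ⟨w - (1 - s) • a, ?_⟩
  rw [drag, tent_eq_of_le hR (by rw [hnorm]; nlinarith [hs.2]), hnorm,
    mul_div_cancel_right₀ _ hR.ne']
  abel

lemma approximatesLinearOn_drag (m : E) {R : ℝ} (hR : 0 < R) (a : E) :
    ApproximatesLinearOn (drag m R a) (ContinuousLinearMap.id ℝ E) univ
      (‖a‖ / R).toNNReal := by
  intro x _ y _
  have : drag m R a x - drag m R a y - (x - y) = (tent m R x - tent m R y) • a := by
    simp only [drag, sub_smul]
    abel
  rw [ContinuousLinearMap.id_apply, this, norm_smul, Real.norm_eq_abs,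
    Real.coe_toNNReal _ (by positivity)]
  calc |tent m R x - tent m R y| * ‖a‖ ≤ ‖x - y‖ / R * ‖a‖ := by
        gcongr
        exact abs_tent_sub_tent_le m hR x y
    _ = ‖a‖ / R * ‖x - y‖ := by ring

/-- For `‖a‖ < R` the drag is a perturbation of the identity by a contraction. -/
def dragHomeomorph [CompleteSpace E] (m : E) {R : ℝ} (hR : 0 < R) {a : E} (ha : ‖a‖ < R) :
    E ≃ₜ E :=
  (approximatesLinearOn_drag m hR a).toHomeomorph (f' := ContinuousLinearEquiv.refl ℝ E) _ <| by
    rcases subsingleton_or_nontrivial E with h | h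
    · exact Or.inl h
    right
    rw [ContinuousLinearEquiv.refl_symm, ContinuousLinearEquiv.coe_refl,
      ContinuousLinearMap.nnnorm_id, inv_one, Real.toNNReal_lt_one, div_lt_one hR]
    exact ha

@[simp]
lemma coe_dragHomeomorph [CompleteSpace E] (m : E) {R : ℝ} (hR : 0 < R) {a : E}
    (ha : ‖a‖ < R) : ⇑(dragHomeomorph m hR ha) = drag m R a :=
  rfl

theorem _root_.IsPreconnected.exists_homeomorph_apply_eq [CompleteSpace E] {U : Set E}
    (hUc : IsPreconnected U) (hU : IsOpen U) {p q : E} (hp : p ∈ U) (hq : q ∈ U) :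
    ∃ h : E ≃ₜ E, (∀ x ∉ U, h x = x) ∧ h p = q := by
  refine hUc.induction₂ (fun p q => ∃ h : E ≃ₜ E, (∀ x ∉ U, h x = x) ∧ h p = q)
    (fun x hx => ?_) (fun x y z _ _ _ ⟨g, hgU, hg⟩ ⟨h, hhU, hh⟩ => ?_)
    (fun x y _ _ ⟨h, hU, hh⟩ => ?_) hp hq
  · obtain ⟨R, hR, hRU⟩ := Metric.isOpen_iff.1 hU x hx
    filter_upwards [nhdsWithin_le_nhds (ball_mem_nhds x hR)] with y hy
    rw [mem_ball, dist_eq_norm] at hy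
    refine ⟨dragHomeomorph x hR hy, fun w hw => ?_, by simp [drag_self]⟩
    refine drag_eq_self hR _ ?_
    rw [← dist_eq_norm]
    exact not_lt.1 fun h => hw (hRU h)
  · exact ⟨g.trans h, fun w hw => by simp [hgU w hw, hhU w hw], by simp [hg, hh]⟩
  · exact ⟨h.symm, fun w hw => by rw [h.symm_apply_eq, hU w hw],
      by rw [← hh, h.symm_apply_apply]⟩

end Drag

section Pinch

variable {E : Type*} [NormedAddCommGroup E] [NormedSpace ℝ E]

/-- Collapses the segment `[m, z]` to `z`; it is injective elsewhere. -/
def pinch (m z : E) : E → E := drag m ‖z - m‖ (z - m)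

lemma continuous_pinch (m z : E) : Continuous (pinch m z) := continuous_drag _ _ _

lemma pinch_self (m z : E) : pinch m z m = z := by
  rw [pinch, drag_self, add_sub_cancel]

lemma pinch_eq_self {m z x : E} (hmz : m ≠ z) (hx : ‖z - m‖ ≤ ‖x - m‖) : pinch m z x = x :=
  drag_eq_self (norm_pos_iff.2 (sub_ne_zero.2 hmz.symm)) _ hx

lemma image_pinch_subset {m z : E} (hmz : m ≠ z) (s : Set E) :
    pinch m z '' s ⊆ s ∪ closedBall m ‖z - m‖ :=
  image_drag_subset m (norm_pos_iff.2 (sub_ne_zero.2 hmz.symm)) le_rfl s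

lemma pinch_of_mem_segment {m z x : E} (hx : x ∈ segment ℝ m z) : pinch m z x = z := by
  rcases eq_or_ne z m with rfl | hzm
  · rw [segment_same, mem_singleton_iff] at hx
    rw [hx, pinch_self]
  rw [segment_eq_image'] at hx
  obtain ⟨θ, hθ, rfl⟩ := hx
  have hρ : 0 < ‖z - m‖ := norm_pos_iff.2 (sub_ne_zero.2 hzm)
  have hnorm : ‖m + θ • (z - m) - m‖ = θ * ‖z - m‖ := by
    rw [add_sub_cancel_left, norm_smul, Real.norm_of_nonneg hθ.1]
  rw [pinch, drag, tent_eq_of_le hρ (by rw [hnorm]; nlinarith [hθ.2]), hnorm,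
    mul_div_cancel_right₀ _ hρ.ne', add_assoc, ← add_smul, add_sub_cancel, one_smul,
    add_sub_cancel]

lemma mem_segment_of_pinch_eq [StrictConvexSpace ℝ E] {m z x y : E}
    (h : pinch m z x = pinch m z y) (hxy : x ≠ y) :
    x ∈ segment ℝ m z ∧ y ∈ segment ℝ m z := by
  wlog hle : tent m ‖z - m‖ x ≤ tent m ‖z - m‖ y generalizing x y
  · exact (this h.symm hxy.symm (le_of_not_ge hle)).symm
  set a := z - m
  set l := tent m ‖a‖ y - tent m ‖a‖ x with hl_def
  have hxy' : x - y = l • a := by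
    rw [pinch, drag, drag] at h
    rw [sub_smul, ← sub_eq_zero, ← sub_eq_zero.2 h]
    abel
  have hl : 0 < l := (sub_nonneg.2 hle).lt_of_ne fun h0 => hxy (by
    rwa [hl_def, ← h0, zero_smul, sub_eq_zero] at hxy')
  have ha : a ≠ 0 := fun ha => hxy (by rwa [ha, smul_zero, sub_eq_zero] at hxy')
  have hρ : 0 < ‖a‖ := norm_pos_iff.2 ha
  have hy : ‖y - m‖ < ‖a‖ := not_le.1 fun hy => by
    have := tent_nonneg m ‖a‖ x
    rw [tent_eq_zero hρ hy] at hl_def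
    linarith
  -- `‖x - m‖ = ‖x - y‖ + ‖y - m‖`, so `x - y` and `y - m` point the same way
  have hx : l * ‖a‖ + ‖y - m‖ ≤ ‖x - m‖ := by
    have h1 : 1 - ‖x - m‖ / ‖a‖ ≤ tent m ‖a‖ x := le_max_left _ _
    have h2 : l = 1 - ‖y - m‖ / ‖a‖ - tent m ‖a‖ x := by rw [← tent_eq_of_le hρ hy.le]
    have h3 : l ≤ (‖x - m‖ - ‖y - m‖) / ‖a‖ := by rw [sub_div]; linarith
    rw [le_div_iff₀ hρ] at h3
    linarith
  have hray : SameRay ℝ (l • a) (y - m) := by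
    refine sameRay_iff_norm_add.2 (le_antisymm (norm_add_le _ _) ?_)
    rw [← hxy', sub_add_sub_cancel, hxy', norm_smul, Real.norm_of_nonneg hl.le]
    exact hx
  obtain ⟨μ, hμ, hμy⟩ := hray.exists_nonneg_left (smul_ne_zero hl.ne' ha)
  rw [smul_smul] at hμy
  have hν : μ * l < 1 := by
    rwa [← hμy, norm_smul, Real.norm_of_nonneg (by positivity),
      mul_lt_iff_lt_one_left hρ] at hy
  have hlν : l + μ * l ≤ 1 := by
    have h1 := tent_nonneg m ‖a‖ x
    rw [tent_eq_of_le hρ hy.le, ← hμy, norm_smul, Real.norm_of_nonneg (by positivity),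
      mul_div_cancel_right₀ _ hρ.ne'] at hl_def
    linarith
  rw [segment_eq_image']
  refine ⟨⟨l + μ * l, ⟨by positivity, hlν⟩, ?_⟩, ⟨μ * l, ⟨by positivity, hν.le⟩, ?_⟩⟩
  · change m + (l + μ * l) • a = x
    rw [add_smul, hμy, ← hxy']
    abel
  · change m + (μ * l) • a = y
    rw [hμy]
    abel

lemma injOn_pinch [StrictConvexSpace ℝ E] {m z : E} {s : Set E}
    (hs : segment ℝ m z ∩ s ⊆ {m}) : InjOn (pinch m z) s := by
  intro x hx y hy hxy
  by_contra hne
  obtain ⟨hxI, hyI⟩ := mem_segment_of_pinch_eq hxy hne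
  exact hne ((hs ⟨hxI, hx⟩).trans (hs ⟨hyI, hy⟩).symm)

lemma image_pinch_compl_union_segment [StrictConvexSpace ℝ E] {m z : E} {s : Set E}
    (hm : m ∈ s) (hmz : m ≠ z) : pinch m z '' (s ∪ segment ℝ m z)ᶜ = (pinch m z '' s)ᶜ := by
  refine Subset.antisymm ?_ fun w hw => ?_
  · rintro _ ⟨y, hy, rfl⟩ ⟨x, hx, hxy⟩
    by_cases hne : x = y
    · exact hy (Or.inl (hne ▸ hx))
    · exact hy (Or.inr (mem_segment_of_pinch_eq hxy hne).2)
  · obtain ⟨y, rfl⟩ : ∃ y, pinch m z y = w :=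
      drag_surjective m (z - m) (norm_pos_iff.2 (sub_ne_zero.2 hmz.symm)) w
    refine ⟨y, fun hy => hw ?_, rfl⟩
    rcases hy with hy | hy
    · exact ⟨y, hy, rfl⟩
    · exact ⟨m, hm, by rw [pinch_self, pinch_of_mem_segment hy]⟩

end Pinch

section Topology

theorem _root_.IsPreconnected.of_union_of_inter {X : Type*} [TopologicalSpace X] {P Q : Set X}
    (hP : IsOpen P) (hQ : IsOpen Q) (hPQ : IsPreconnected (P ∪ Q))
    (hPQ' : IsPreconnected (P ∩ Q)) : IsPreconnected P := by
  rw [isPreconnected_iff_subset_of_disjoint] at hPQ hPQ' ⊢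
  -- if `P ∩ Q ⊆ u`, then `(P ∩ u) ∪ Q` and `P ∩ v` separate `P ∪ Q`
  have key (u v : Set X) (hu : IsOpen u) (hv : IsOpen v) (huv : P ∩ (u ∩ v) = ∅)
      (hPQu : P ∩ Q ⊆ u) (hPuv : P ⊆ u ∪ v) : P ⊆ u ∨ P ⊆ v := by
    refine (hPQ _ _ ((hP.inter hu).union hQ) (hP.inter hv) ?_ ?_).imp ?_ ?_
    · rintro x (hx | hx)
      · exact (hPuv hx).imp (fun h => Or.inl ⟨hx, h⟩) (⟨hx, ·⟩)
      · exact Or.inl (Or.inr hx)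
    · refine eq_empty_of_forall_notMem ?_
      rintro x ⟨-, hxu | hxQ, hxP, hxv⟩
      · exact huv.subset ⟨hxP, hxu.2, hxv⟩
      · exact huv.subset ⟨hxP, hPQu ⟨hxP, hxQ⟩, hxv⟩
    · exact fun h x hx => (h (Or.inl hx)).elim (fun h => h.2) fun hxQ => hPQu ⟨hx, hxQ⟩
    · exact fun h x hx => (h (Or.inl hx)).2
  intro u v hu hv hPuv huv
  rcases hPQ' u v hu hv (inter_subset_left.trans hPuv)
    (subset_empty_iff.1 (huv ▸ inter_subset_inter_left _ inter_subset_left)) with h | h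
  · exact key u v hu hv huv h hPuv
  · exact (key v u hv hu (by rwa [inter_comm v]) h (by rwa [union_comm])).symm

variable {E : Type*} [NormedAddCommGroup E] [NormedSpace ℝ E]

lemma isCompact_segment (x y : E) : IsCompact (segment ℝ x y) :=
  convexHull_pair (𝕜 := ℝ) x y ▸ (toFinite {x, y}).isCompact_convexHull ℝ

theorem isConnected_compl_closedBall (hE : 1 < Module.rank ℝ E) (c : E) {r : ℝ} (hr : 0 ≤ r) :
    IsConnected (closedBall c r)ᶜ := by
  have : (closedBall c r)ᶜ = (fun x => x + (r / ‖x - c‖) • (x - c)) '' {c}ᶜ := by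
    ext y
    simp only [mem_compl_iff, mem_closedBall, dist_eq_norm, not_le, mem_image,
      mem_singleton_iff]
    constructor
    · intro hy
      set d := ‖y - c‖
      have hd : 0 < d := hr.trans_lt hy
      have hdr : 0 < d - r := sub_pos.2 hy
      set x := c + ((d - r) / d) • (y - c)
      have hxc : ‖x - c‖ = d - r := by
        rw [add_sub_cancel_left, norm_smul, Real.norm_of_nonneg (by positivity),
          div_mul_cancel₀ _ hd.ne']
      refine ⟨x, fun h => by rw [h, sub_self, norm_zero] at hxc; linarith, ?_⟩
      have hx : x + (r / (d - r)) • (x - c)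
          = c + ((d - r) / d + r / (d - r) * ((d - r) / d)) • (y - c) := by
        simp only [x, add_sub_cancel_left, add_smul, smul_smul]
        abel
      have hcoef : (d - r) / d + r / (d - r) * ((d - r) / d) = 1 := by
        field_simp
        ring
      rw [hxc, hx, hcoef, one_smul, add_sub_cancel]
    · rintro ⟨x, hx, rfl⟩
      have hd : 0 < ‖x - c‖ := norm_pos_iff.2 (sub_ne_zero.2 hx)
      have h : x + (r / ‖x - c‖) • (x - c) - c = (1 + r / ‖x - c‖) • (x - c) := by
        rw [add_smul, one_smul]
        abel
      rw [h, norm_smul, Real.norm_of_nonneg (by positivity), add_mul,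
        div_mul_cancel₀ _ hd.ne']
      linarith
  rw [this]
  refine (isConnected_compl_singleton_of_one_lt_rank hE c).image _ fun x hx => ?_
  have : ‖x - c‖ ≠ 0 := norm_ne_zero_iff.2 (sub_ne_zero.2 hx)
  fun_prop (disch := assumption)

lemma mem_frontier_of_segment_inter_eq {s : Set E} {x y : E} (hxy : x ≠ y)
    (h : segment ℝ x y ∩ s = {x}) : x ∈ frontier s := by
  rw [frontier_eq_closure_inter_closure]
  refine ⟨subset_closure (h.symm.subset rfl).2,
    closure_mono ?_ (segment_subset_closure_openSegment (left_mem_segment ℝ x y))⟩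
  intro w hw hws
  have hwx : w = x := h.subset ⟨openSegment_subset_segment _ _ _ hw, hws⟩
  exact hxy (left_mem_openSegment_iff.1 (hwx ▸ hw))

theorem _root_.IsCompact.exists_segment_inter_eq_singleton {s : Set E} (hs : IsCompact s)
    {c : E} (hc : c ∈ s) (z : E) : ∃ x ∈ segment ℝ c z, segment ℝ x z ∩ s = {x} := by
  obtain ⟨x, ⟨hxs, hxI⟩, hmin⟩ :=
    (hs.inter_right (isCompact_segment c z).isClosed).exists_isMinOn
      ⟨c, hc, left_mem_segment _ _ _⟩ (continuous_id.dist continuous_const).continuousOn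
  refine ⟨x, hxI, Subset.antisymm (fun y ⟨hy, hys⟩ => ?_)
    (singleton_subset_iff.2 ⟨left_mem_segment _ _ _, hxs⟩)⟩
  have h1 : dist x z ≤ dist y z :=
    hmin ⟨hys, (convex_segment c z).segment_subset hxI (right_mem_segment _ _ _) hy⟩
  have h2 := dist_add_dist_of_mem_segment hy
  exact (dist_le_zero.1 (by linarith)).symm

theorem disjoint_connectedComponentIn_of_isBounded [Nontrivial E] {J N K : Set E}
    (hJN : J ⊆ N) (hN : Bornology.IsBounded N) (hNc : IsPreconnected Nᶜ) (hNK : N ∩ K ⊆ J)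
    {x : E} (hx : Bornology.IsBounded (connectedComponentIn Jᶜ x)) :
    Disjoint (connectedComponentIn Jᶜ x) K := by
  by_cases h : (connectedComponentIn Jᶜ x ∩ Nᶜ).Nonempty
  · obtain ⟨y, hyC, hyN⟩ := h
    have hNC : Nᶜ ⊆ connectedComponentIn Jᶜ x := connectedComponentIn_eq hyC ▸
      hNc.subset_connectedComponentIn hyN (compl_subset_compl.2 hJN)
    have := hN.union (hx.subset hNC)
    rw [union_compl_self] at this
    exact absurd this (NormedSpace.unbounded_univ ℝ E)
  · rw [not_nonempty_iff_eq_empty, ← disjoint_iff_inter_eq_empty,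
      disjoint_compl_right_iff_subset] at h
    exact Set.disjoint_left.2 fun y hyC hyK =>
      connectedComponentIn_subset _ _ hyC (hNK ⟨h hyC, hyK⟩)

end Topology

section Whisker

lemma mem_segment_zero_one {w : ℂ} :
    w ∈ segment ℝ (0 : ℂ) 1 ↔ w.im = 0 ∧ w.re ∈ Icc 0 1 := by
  rw [segment_eq_image']
  constructor
  · rintro ⟨θ, hθ, rfl⟩
    simpa using hθ
  · rintro ⟨him, hre⟩
    exact ⟨w.re, hre, Complex.ext (by simp) (by simp [him])⟩

lemma one_add_mem_thickening_segment_diff (s : ℝ) {δ ε : ℝ} (hε : 0 < ε) (hεδ : ε < δ) :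
    ((1 + ε : ℝ) : ℂ) ∈ thickening δ (segment ℝ (s : ℂ) 1) \ segment ℝ 0 1 := by
  refine ⟨mem_thickening_iff.2 ⟨1, right_mem_segment _ _ _, ?_⟩, fun h => ?_⟩
  · rw [dist_eq_norm, Complex.ofReal_add, Complex.ofReal_one, add_sub_cancel_left,
      Complex.norm_real, Real.norm_of_nonneg hε.le]
    exact hεδ
  · have := (mem_segment_zero_one.1 h).2.2
    simp only [Complex.ofReal_re] at this
    linarith

lemma isPreconnected_thickening_segment_diff {s δ : ℝ} (hδ : 0 < δ) (hδs : δ ≤ s)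
    (hs : s ≤ 1) : IsPreconnected (thickening δ (segment ℝ (s : ℂ) 1) \ segment ℝ 0 1) := by
  set Th := thickening δ (segment ℝ (s : ℂ) 1)
  have hTh : Convex ℝ Th := (convex_segment _ _).thickening δ
  have hcorner (t : ℝ) (ht : |t| ≤ δ / 4) : (⟨1 + δ / 4, t⟩ : ℂ) ∈ Th := by
    refine mem_thickening_iff.2 ⟨1, right_mem_segment _ _ _, ?_⟩
    calc dist (⟨1 + δ / 4, t⟩ : ℂ) 1 ≤ |δ / 4| + |t| := by
          rw [dist_eq_norm,
            show (⟨1 + δ / 4, t⟩ : ℂ) - 1 = ⟨δ / 4, t⟩ by apply Complex.ext <;> simp]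
          exact Complex.norm_le_abs_re_add_abs_im _
      _ < δ := by rw [abs_of_pos (by positivity)]; linarith
  have hre (w : ℂ) (hw : w ∈ Th) : 0 < w.re := by
    obtain ⟨p, hp, hwp⟩ := mem_thickening_iff.1 hw
    have hp : s ≤ p.re := (convex_halfSpace_re_ge (r := s)).segment_subset
      (by simp) (by simpa using hs) hp
    have := (abs_le.1 ((Complex.abs_re_le_norm (w - p)).trans (dist_eq_norm w p).ge)).1
    rw [Complex.sub_re] at this
    linarith
  have key : Th \ segment ℝ 0 1 =
      (Th ∩ {w | 0 < w.im}) ∪ (Th ∩ {w | 1 < w.re}) ∪ (Th ∩ {w | w.im < 0}) := by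
    ext w
    simp only [mem_sdiff, mem_union, mem_inter_iff, mem_ofPred_eq, mem_segment_zero_one,
      mem_Icc]
    constructor
    · rintro ⟨hw, hwI⟩
      rcases lt_trichotomy w.im 0 with h | h | h
      · exact Or.inr ⟨hw, h⟩
      · exact Or.inl (Or.inr ⟨hw, by by_contra! h'; exact hwI ⟨h, (hre w hw).le, h'⟩⟩)
      · exact Or.inl (Or.inl ⟨hw, h⟩)
    · rintro ((⟨hw, h⟩ | ⟨hw, h⟩) | ⟨hw, h⟩)
      · exact ⟨hw, fun h' => h.ne' h'.1⟩
      · exact ⟨hw, fun h' => h'.2.2.not_gt h⟩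
      · exact ⟨hw, fun h' => h.ne h'.1⟩
  have hδ4 : |δ / 4| ≤ δ / 4 := (abs_of_pos (by positivity)).le
  rw [key]
  refine IsPreconnected.union' ?_ (IsPreconnected.union' ?_ ?_ ?_) ?_
  · exact ⟨⟨1 + δ / 4, -(δ / 4)⟩, Or.inr ⟨hcorner _ (by rwa [abs_neg]), by simp; positivity⟩,
      hcorner _ (by rwa [abs_neg]), by simp; positivity⟩
  · exact ⟨⟨1 + δ / 4, δ / 4⟩, ⟨hcorner _ hδ4, by simp; positivity⟩,
      hcorner _ hδ4, by simp; positivity⟩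
  · exact (hTh.inter (convex_halfSpace_im_gt 0)).isPreconnected
  · exact (hTh.inter (convex_halfSpace_re_gt 1)).isPreconnected
  · exact (hTh.inter (convex_halfSpace_im_lt 0)).isPreconnected

lemma exists_thickening_segment_subset_compl {F : Set ℂ} (hF : IsClosed F)
    (hIF : segment ℝ 0 1 ∩ F ⊆ {0}) {s : ℝ} (hs : s ∈ Ioc 0 1) :
    ∃ δ, 0 < δ ∧ δ ≤ s ∧ thickening δ (segment ℝ (s : ℂ) 1) ⊆ Fᶜ := by
  have hsub : segment ℝ (s : ℂ) 1 ⊆ Fᶜ := by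
    intro w hw hwF
    have hsI : (s : ℂ) ∈ segment ℝ 0 1 :=
      mem_segment_zero_one.2 ⟨by simp, by simp [hs.1.le, hs.2]⟩
    have hw0 : w = 0 :=
      hIF ⟨(convex_segment _ _).segment_subset hsI (right_mem_segment _ _ _) hw, hwF⟩
    have hre : s ≤ w.re := (convex_halfSpace_re_ge (r := s)).segment_subset
      (by simp) (by simpa using hs.2) hw
    rw [hw0, Complex.zero_re] at hre
    exact hs.1.not_ge hre
  obtain ⟨δ, hδ, hδF⟩ :=
    (isCompact_segment _ _).exists_thickening_subset_open hF.isOpen_compl hsub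
  exact ⟨min δ s, lt_min hδ hs.1, min_le_right _ _,
    (thickening_mono (min_le_left _ _) _).trans hδF⟩

theorem isPreconnected_compl_union_segment_zero_one {F : Set ℂ} (hF : IsClosed F)
    (hFc : IsPreconnected Fᶜ) (hIF : segment ℝ 0 1 ∩ F = {0}) :
    IsPreconnected (F ∪ segment ℝ 0 1)ᶜ := by
  set I := segment ℝ (0 : ℂ) 1
  have h0F : (0 : ℂ) ∈ F := (hIF.symm.subset rfl).2
  choose! δ hδ0 hδs hδF using fun s => exists_thickening_segment_subset_compl hF hIF.subset
    (s := s)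
  have h1 : (1 : ℝ) ∈ Ioc 0 1 := ⟨one_pos, le_rfl⟩
  set T : ℝ → Set ℂ := fun s => thickening (δ s) (segment ℝ (s : ℂ) 1)
  -- `Fᶜ` is the union of `(F ∪ I)ᶜ` and the open set `O ⊇ I \ {0}`, and `O \ I` is connected
  set O := ⋃ s ∈ Ioc (0 : ℝ) 1, T s
  refine IsPreconnected.of_union_of_inter (Q := O)
    (hF.union (isCompact_segment _ _).isClosed).isOpen_compl
    (isOpen_biUnion fun _ _ => isOpen_thickening) ?_ ?_
  · convert hFc using 1
    refine Subset.antisymm (union_subset (compl_subset_compl.2 subset_union_left)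
      (iUnion₂_subset hδF)) fun w hw => ?_
    by_cases hwI : w ∈ I
    · obtain ⟨him, hre⟩ := mem_segment_zero_one.1 hwI
      have hwre : w = (w.re : ℂ) := Complex.ext rfl (by simp [him])
      have hre0 : 0 < w.re := hre.1.lt_of_ne fun h => hw (by
        rw [hwre, ← h, Complex.ofReal_zero]; exact h0F)
      refine Or.inr (mem_iUnion₂.2 ⟨w.re, ⟨hre0, hre.2⟩,
        self_subset_thickening (hδ0 _ ⟨hre0, hre.2⟩) _ ?_⟩)
      rw [hwre]
      exact left_mem_segment _ _ _
    · exact Or.inl fun h => h.elim hw hwI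
  · refine isPreconnected_of_forall ((1 + δ 1 / 2 : ℝ) : ℂ) fun y ⟨hyFI, hyO⟩ => ?_
    obtain ⟨s, hs, hys⟩ := mem_iUnion₂.1 hyO
    have hTs (s : ℝ) (hs : s ∈ Ioc 0 1) : T s \ I ⊆ (F ∪ I)ᶜ ∩ O := fun w ⟨hw, hwI⟩ =>
      ⟨fun h => h.elim (hδF s hs hw) hwI, mem_iUnion₂.2 ⟨s, hs, hw⟩⟩
    have hpre (s : ℝ) (hs : s ∈ Ioc 0 1) : IsPreconnected (T s \ I) :=
      isPreconnected_thickening_segment_diff (hδ0 s hs) (hδs s hs) hs.2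
    have hmin := lt_min (hδ0 s hs) (hδ0 1 h1)
    refine ⟨T s \ I ∪ T 1 \ I, union_subset (hTs s hs) (hTs 1 h1),
      Or.inr (one_add_mem_thickening_segment_diff 1 (half_pos (hδ0 1 h1))
        (half_lt_self (hδ0 1 h1))),
      Or.inl ⟨hys, fun h => hyFI (Or.inr h)⟩, ?_⟩
    refine IsPreconnected.union' ⟨_,
      one_add_mem_thickening_segment_diff s (half_pos hmin)
        ((half_lt_self hmin).trans_le (min_le_left _ _)),
      one_add_mem_thickening_segment_diff 1 (half_pos hmin)
        ((half_lt_self hmin).trans_le (min_le_right _ _))⟩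
      (hpre s hs) (hpre 1 h1)

theorem isPreconnected_compl_union_segment {F : Set ℂ} (hF : IsClosed F)
    (hFc : IsPreconnected Fᶜ) {x₀ z : ℂ} (hF' : segment ℝ x₀ z ∩ F = {x₀}) :
    IsPreconnected (F ∪ segment ℝ x₀ z)ᶜ := by
  rcases eq_or_ne z x₀ with rfl | hz
  · rwa [segment_same, union_eq_left.2 (hF' ▸ inter_subset_right)]
  set e : ℂ ≃ₜ ℂ :=
    (Homeomorph.mulLeft₀ (z - x₀) (sub_ne_zero.2 hz)).trans (Homeomorph.addLeft x₀)
  have he : e '' segment ℝ 0 1 = segment ℝ x₀ z := by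
    rw [segment_eq_image', segment_eq_image', image_image]
    refine image_congr fun θ _ => ?_
    simp [e, Complex.real_smul, mul_comm]
  have h01 : segment ℝ 0 1 ∩ e ⁻¹' F = {0} := by
    rw [← e.preimage_image (segment ℝ 0 1), he, ← preimage_inter, hF']
    ext w
    simp [e, sub_ne_zero.2 hz]
  have := isPreconnected_compl_union_segment_zero_one (hF.preimage e.continuous)
    (by rwa [← preimage_compl, e.isPreconnected_preimage]) h01
  rwa [← e.isPreconnected_image, e.image_compl, image_union, e.image_preimage, he] at this

end Whisker

section Kissing

def IsKissingPath (K : Set ℂ) (z₁ z₂ : ℂ) (Γ : ℂ → ℂ) : Prop :=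
  ContinuousOn Γ (sphere 0 1) ∧ InjOn Γ (sphere 0 1) ∧ z₁ ∈ Γ '' sphere 0 1 ∧
    z₂ ∈ Γ '' sphere 0 1 ∧ Γ '' sphere 0 1 ∩ K = {z₁, z₂} ∧
    ∀ x ∈ (Γ '' sphere 0 1)ᶜ,
      Bornology.IsBounded (connectedComponentIn (Γ '' sphere 0 1)ᶜ x) →
        Disjoint (connectedComponentIn (Γ '' sphere 0 1)ᶜ x) K

variable {K : Set ℂ}

lemma mem_sphere_of_closedBall_inter_eq {c z : ℂ} {r : ℝ} (hz : z ∉ interior K)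
    (hzI : z ∈ closure (interior K)) (hB : closedBall c r ∩ K = {z}) : z ∈ sphere c r := by
  refine (mem_closedBall.1 (hB.symm.subset rfl).1).eq_or_lt.resolve_right fun hlt => hz ?_
  obtain ⟨p, hpB, hpK⟩ := mem_closure_iff.1 hzI (ball c r) isOpen_ball hlt
  rwa [hB.subset ⟨ball_subset_closedBall hpB, interior_subset hpK⟩] at hpK

lemma center_notMem_of_closedBall_inter_eq {c z : ℂ} {r : ℝ} (hr : 0 < r)
    (hB : closedBall c r ∩ K = {z}) (hz : z ∈ sphere c r) : c ∉ K := fun hc => by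
  rw [← hB.subset ⟨mem_closedBall_self hr.le, hc⟩, mem_sphere, dist_self] at hz
  exact hr.ne hz

theorem exists_homeomorph_image_closedBall_inter_eq (hK : IsClosed K)
    (hKc : IsPreconnected Kᶜ) {c z q : ℂ} {r : ℝ} (hr : 0 < r)
    (hB : closedBall c r ∩ K = {z}) (hz : z ∈ sphere c r) (hq : q ∉ K) :
    ∃ Φ : ℂ ≃ₜ ℂ, Φ '' closedBall 0 1 ∩ K = {z} ∧ z ∈ frontier (Φ '' closedBall 0 1) ∧
      q ∈ Φ '' closedBall 0 1 := by
  obtain ⟨Ψ, hΨK, hΨc⟩ := hKc.exists_homeomorph_apply_eq hK.isOpen_compl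
    (center_notMem_of_closedBall_inter_eq hr hB hz) hq
  have hΨK : ∀ x ∈ K, Ψ x = x := fun x hx => hΨK x (not_not_intro hx)
  have hΨK' : Ψ ⁻¹' K = K := by
    refine Subset.antisymm (fun x hx => ?_) fun x hx => ?_
    · rwa [← Ψ.injective (hΨK _ hx)]
    · rwa [mem_preimage, hΨK x hx]
  set A : ℂ ≃ₜ ℂ := (Homeomorph.smulOfNeZero r hr.ne').trans (Homeomorph.addLeft c)
  have hA : A.trans Ψ '' closedBall 0 1 = Ψ '' closedBall c r := by
    rw [← affinity_unitClosedBall hr.le, ← image_smul, ← image_vadd, image_image, image_image]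
    rfl
  have hzK : z ∈ K := (hB.symm.subset rfl).2
  refine ⟨A.trans Ψ, ?_, ?_, ?_⟩
  all_goals rw [hA]
  · rw [← image_inter_preimage, hΨK', hB, image_singleton, hΨK z hzK]
  · rw [← Ψ.image_frontier, frontier_closedBall _ hr.ne']
    exact ⟨z, hz, hΨK z hzK⟩
  · exact ⟨c, mem_closedBall_self hr.le, hΨc⟩

theorem isPreconnected_compl_image_pinch {M : Set ℂ} (hM : IsClosed M)
    (hMc : IsPreconnected Mᶜ) {x₀ z : ℂ} (hx₀z : x₀ ≠ z) (hseg : segment ℝ x₀ z ∩ M = {x₀}) :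
    IsPreconnected (pinch x₀ z '' M)ᶜ := by
  rw [← image_pinch_compl_union_segment (hseg.symm.subset rfl).2 hx₀z]
  exact (isPreconnected_compl_union_segment hM hMc hseg).image _
    (continuous_pinch _ _).continuousOn

theorem isKissingPath_pinch_comp (Φ : ℂ ≃ₜ ℂ) {z₁ x₀ z₂ : ℂ} (hx₀z₂ : x₀ ≠ z₂)
    (hMK : Φ '' closedBall 0 1 ∩ K = {z₁}) (hz₁ : z₁ ∈ frontier (Φ '' closedBall 0 1))
    (hseg : segment ℝ x₀ z₂ ∩ Φ '' closedBall 0 1 = {x₀})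
    (hball : closedBall x₀ ‖z₂ - x₀‖ ∩ K = {z₂}) :
    IsKissingPath K z₁ z₂ (pinch x₀ z₂ ∘ Φ) := by
  set M := Φ '' closedBall 0 1
  set Λ := pinch x₀ z₂
  have hMcpt : IsCompact M := (isCompact_closedBall 0 1).image Φ.continuous
  have hJ : (Λ ∘ Φ) '' sphere 0 1 = Λ '' frontier M := by
    rw [image_comp, ← Φ.image_frontier, frontier_closedBall _ one_ne_zero]
  have hz₁K : z₁ ∈ K := (hMK.symm.subset rfl).2
  have hz₂K : z₂ ∈ K := (hball.symm.subset rfl).2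
  have hz₁z₂ : z₁ ≠ z₂ := fun h => hx₀z₂ <|
    (hseg.subset ⟨right_mem_segment _ _ _, h ▸ (hMK.symm.subset rfl).1⟩).symm
  have hΛM : Λ '' M ∩ K ⊆ {z₁, z₂} := fun w ⟨hw, hwK⟩ =>
    (image_pinch_subset hx₀z₂ M hw).imp (fun h => hMK.subset ⟨h, hwK⟩)
      (fun h => hball.subset ⟨h, hwK⟩)
  have hz₁J : z₁ ∈ Λ '' frontier M := by
    refine ⟨z₁, hz₁, pinch_eq_self hx₀z₂ (not_lt.1 fun h => hz₁z₂ ?_)⟩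
    exact hball.subset ⟨mem_closedBall.2 (by rw [dist_eq_norm]; exact h.le), hz₁K⟩
  have hz₂J : z₂ ∈ Λ '' frontier M :=
    ⟨x₀, mem_frontier_of_segment_inter_eq hx₀z₂ hseg, pinch_self x₀ z₂⟩
  have hJM : Λ '' frontier M ⊆ Λ '' M := image_mono hMcpt.isClosed.frontier_subset
  have hpair : {z₁, z₂} ⊆ Λ '' frontier M := insert_subset hz₁J (singleton_subset_iff.2 hz₂J)
  have hMc : IsPreconnected Mᶜ := by
    rw [← Φ.image_compl]
    exact (isConnected_compl_closedBall (by simp) 0 zero_le_one).isPreconnected.image _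
      Φ.continuous.continuousOn
  refine ⟨((continuous_pinch _ _).comp Φ.continuous).continuousOn, ?_, hJ ▸ hz₁J, hJ ▸ hz₂J,
    hJ ▸ Subset.antisymm ((inter_subset_inter_left K hJM).trans hΛM) ?_, hJ ▸ ?_⟩
  · exact (injOn_pinch hseg.subset).comp Φ.injective.injOn
      fun w hw => ⟨w, sphere_subset_closedBall hw, rfl⟩
  · exact subset_inter hpair (insert_subset hz₁K (singleton_subset_iff.2 hz₂K))
  · exact fun x _ => disjoint_connectedComponentIn_of_isBounded hJM
      (hMcpt.image (continuous_pinch _ _)).isBounded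
      (isPreconnected_compl_image_pinch hMcpt.isClosed hMc hx₀z₂ hseg) (hΛM.trans hpair)

end Kissing

end KissingPath

open KissingPath in
theorem exists_kissing_path_general (K : Set ℂ) (hK : IsCompact K)
    (hKc : IsConnected Kᶜ)
    (z₁ z₂ : ℂ) (hne : z₁ ≠ z₂)
    (hz₁ : z₁ ∈ frontier K) (hz₂ : z₂ ∈ frontier K)
    (hz₁I : ∀ U : Set ℂ, IsOpen U → z₁ ∈ U → (U ∩ interior K).Nonempty)
    (hz₂I : ∀ U : Set ℂ, IsOpen U → z₂ ∈ U → (U ∩ interior K).Nonempty)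
    (hca₁ : ∃ c : ℂ, ∃ r : ℝ, 0 < r ∧ Metric.closedBall c r ∩ K = {z₁})
    (hca₂ : ∃ c : ℂ, ∃ r : ℝ, 0 < r ∧ Metric.closedBall c r ∩ K = {z₂}) :
    ∃ Γ : ℂ → ℂ, ContinuousOn Γ (Metric.sphere (0 : ℂ) 1) ∧
      Set.InjOn Γ (Metric.sphere (0 : ℂ) 1) ∧
      z₁ ∈ Γ '' Metric.sphere (0 : ℂ) 1 ∧
      z₂ ∈ Γ '' Metric.sphere (0 : ℂ) 1 ∧
      (Γ '' Metric.sphere (0 : ℂ) 1) ∩ K = {z₁, z₂} ∧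
      (∀ x ∈ (Γ '' Metric.sphere (0 : ℂ) 1)ᶜ,
        Bornology.IsBounded (connectedComponentIn (Γ '' Metric.sphere (0 : ℂ) 1)ᶜ x) →
        Disjoint (connectedComponentIn (Γ '' Metric.sphere (0 : ℂ) 1)ᶜ x) K) := by
  obtain ⟨c₁, r₁, hr₁, hB₁⟩ := hca₁
  obtain ⟨c₂, r₂, hr₂, hB₂⟩ := hca₂
  have hz₂s := mem_sphere_of_closedBall_inter_eq hz₂.2 (mem_closure_iff.2 hz₂I) hB₂
  obtain ⟨Φ, hMK, hz₁M, hc₂M⟩ := exists_homeomorph_image_closedBall_inter_eq hK.isClosed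
    hKc.isPreconnected hr₁ hB₁
    (mem_sphere_of_closedBall_inter_eq hz₁.2 (mem_closure_iff.2 hz₁I) hB₁)
    (center_notMem_of_closedBall_inter_eq hr₂ hB₂ hz₂s)
  obtain ⟨x₀, hx₀, hseg⟩ :=
    ((isCompact_closedBall 0 1).image Φ.continuous).exists_segment_inter_eq_singleton hc₂M z₂
  have hz₂K : z₂ ∈ K := (hB₂.symm.subset rfl).2
  have hx₀z₂ : x₀ ≠ z₂ := by
    rintro rfl
    exact hne (hMK.subset ⟨(hseg.symm.subset rfl).2, hz₂K⟩).symm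
  refine ⟨_, isKissingPath_pinch_comp Φ hx₀z₂ hMK hz₁M hseg (Subset.antisymm ?_ ?_)⟩
  · refine (inter_subset_inter_left K (closedBall_subset_closedBall' ?_)).trans hB₂.subset
    rw [← dist_eq_norm, dist_comm, ← mem_sphere.1 hz₂s, dist_comm z₂ c₂]
    linarith [dist_add_dist_of_mem_segment hx₀, dist_comm c₂ x₀]
  · exact singleton_subset_iff.2 ⟨mem_closedBall.2 (dist_eq_norm _ _).le, hz₂K⟩

/-- Existence of a kissing path with respect to two distinct circularly
accessible type I boundary points of `K`. -/
theorem exists_kissing_path (K : Set ℂ) (hK : IsCompact K)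
    (hKc : IsConnected Kᶜ) (hint : (interior K).Nonempty)
    (z₁ z₂ : ℂ) (hne : z₁ ≠ z₂)
    (hz₁ : z₁ ∈ frontier K) (hz₂ : z₂ ∈ frontier K)
    (hz₁I : ∀ U : Set ℂ, IsOpen U → z₁ ∈ U → (U ∩ interior K).Nonempty)
    (hz₂I : ∀ U : Set ℂ, IsOpen U → z₂ ∈ U → (U ∩ interior K).Nonempty)
    (hca₁ : ∃ c : ℂ, ∃ r : ℝ, 0 < r ∧ Metric.closedBall c r ∩ K = {z₁})
    (hca₂ : ∃ c : ℂ, ∃ r : ℝ, 0 < r ∧ Metric.closedBall c r ∩ K = {z₂}) :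
    ∃ Γ : ℂ → ℂ, ContinuousOn Γ (Metric.sphere (0 : ℂ) 1) ∧
      Set.InjOn Γ (Metric.sphere (0 : ℂ) 1) ∧
      z₁ ∈ Γ '' Metric.sphere (0 : ℂ) 1 ∧
      z₂ ∈ Γ '' Metric.sphere (0 : ℂ) 1 ∧
      (Γ '' Metric.sphere (0 : ℂ) 1) ∩ K = {z₁, z₂} ∧
      (∀ x ∈ (Γ '' Metric.sphere (0 : ℂ) 1)ᶜ,
        Bornology.IsBounded (connectedComponentIn (Γ '' Metric.sphere (0 : ℂ) 1)ᶜ x) →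
        Disjoint (connectedComponentIn (Γ '' Metric.sphere (0 : ℂ) 1)ᶜ x) K) :=
  exists_kissing_path_general K hK hKc z₁ z₂ hne hz₁ hz₂ hz₁I hz₂I hca₁ hca₂
end
end

section
/- Let K be a compact subset of ℂ with ℂ \ K connected and with nonempty interior, and let z₁ and z₂ be two distinct points of ∂K, each of which is a type I boundary point and circularly accessible. Then there exists f ∈ A(K) such that: sup_{z ∈ K} |f(z)| = 1; f is injective on K (hence a homeomorphism of K onto its image) and injective holomorphic on the interior of K; f(z₁) = 1 and f(z₂) = −1; and f(K \ {z₁, z₂}) is contained in the open unit disk {w ∈ ℂ : |w| < 1}. -/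
/-!
Put `M z = (z - z₁) / (z - z₂)`; off `{z₁, z₂}` the map is `f = (1 - M^τ) / (1 + M^τ)` for a branch
`M^τ = exp (τ g)` and a small `τ > 0`.

A logarithm `g` of `M` on `K \ {z₁, z₂}`, continuous, holomorphic inside and with bounded imaginary
part, exists: `z - c` has one on `K` for every `c ∉ K`, since having one is locally constant in `c`
on the connected set `ℂ \ K` and the principal branch works for `c` far to the left of `K`. If the
closed disk about `c` meets `K` only at `w` (type I forces `c ∉ K`), then `(z - w) / (z - c)` lies in
the disk `|ζ - 1| < 1` for `z ∈ K \ {w}`, so `z - w = (z - c) · (z - w) / (z - c)` has one on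
`K \ {w}`.

Once `τ |Im g| < π / 2`, `M^τ` maps `K \ {z₁, z₂}` injectively into the right half-plane, which the
Cayley map `t ↦ (1 - t) / (1 + t)` sends injectively into the unit disk. As `M^τ` tends to `0` at
`z₁` and to `∞` at `z₂`, `f` extends continuously by `±1`.
-/

open Complex Metric Set Filter Topology
open scoped Real

lemma Complex.injOn_exp_im_mem_Ioc : InjOn exp (im ⁻¹' Ioc (-π) π) := fun x hx y hy h => by
  rw [← log_exp hx.1 hx.2, h, log_exp hy.1 hy.2]

lemma Complex.re_exp_pos {w : ℂ} (hw : |w.im| < π / 2) : 0 < (exp w).re := by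
  rw [exp_re]
  exact mul_pos (Real.exp_pos _) (Real.cos_pos_of_mem_Ioo (abs_lt.1 hw))

lemma Complex.one_add_exp_ne_zero {w : ℂ} (hw : |w.im| < π / 2) : 1 + exp w ≠ 0 := fun h => by
  have := congrArg re h
  simp only [add_re, one_re, zero_re] at this
  linarith [re_exp_pos hw]

lemma sub_div_sub_mem_slitPlane {z w c : ℂ} (h : dist w c < dist z c) :
    (z - w) / (z - c) ∈ slitPlane := by
  have hzc : z - c ≠ 0 := sub_ne_zero.2 (dist_pos.1 (dist_nonneg.trans_lt h))
  apply ball_one_subset_slitPlane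
  rw [mem_ball, dist_eq_norm, div_sub_one hzc, sub_sub_sub_cancel_left, norm_div,
    div_lt_one (norm_pos_iff.2 hzc)]
  simpa [dist_eq_norm, norm_sub_rev] using h

lemma injOn_sub_div_sub {a b : ℂ} (hab : a ≠ b) : InjOn (fun z => (z - a) / (z - b)) {b}ᶜ := by
  intro x hx y hy h
  rw [div_eq_div_iff (sub_ne_zero.2 hx) (sub_ne_zero.2 hy)] at h
  have h' : (a - b) * (x - y) = 0 := by linear_combination h
  exact sub_eq_zero.1 ((mul_eq_zero.1 h').resolve_left (sub_ne_zero.2 hab))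

lemma tendsto_sub_div_sub_nhds_zero {a b : ℂ} (hab : a ≠ b) :
    Tendsto (fun z => (z - a) / (z - b)) (𝓝 a) (𝓝 0) := by
  have h : ContinuousAt (fun z => (z - a) / (z - b)) a :=
    (continuousAt_id.sub continuousAt_const).div (continuousAt_id.sub continuousAt_const)
      (sub_ne_zero.2 hab)
  simpa using h.tendsto

noncomputable def cayley (t : ℂ) : ℂ := (1 - t) / (1 + t)

lemma norm_cayley_lt_one {t : ℂ} (ht : 0 < t.re) : ‖cayley t‖ < 1 := by
  have h : ‖1 - t‖ < ‖1 + t‖ := by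
    rw [← sq_lt_sq₀ (norm_nonneg _) (norm_nonneg _), Complex.sq_norm, Complex.sq_norm, normSq_apply,
      normSq_apply]
    simp only [sub_re, add_re, sub_im, add_im, one_re, one_im]
    nlinarith
  rw [cayley, norm_div]
  exact (div_lt_one ((norm_nonneg _).trans_lt h)).2 h

lemma cayley_injOn : InjOn cayley {t | 1 + t ≠ 0} := by
  intro x hx y hy h
  rw [cayley, cayley, div_eq_div_iff hx hy] at h
  linear_combination -h / 2

lemma cayley_inv {t : ℂ} (ht : t ≠ 0) : cayley t⁻¹ = -cayley t := by
  rw [cayley, cayley, ← mul_div_mul_right _ _ ht, ← neg_div]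
  congr 1 <;> field_simp <;> ring

lemma differentiableAt_cayley {t : ℂ} (ht : 1 + t ≠ 0) : DifferentiableAt ℂ cayley t :=
  ((differentiableAt_const _).sub differentiableAt_id).div
    ((differentiableAt_const _).add differentiableAt_id) ht

lemma injOn_cayley_exp : InjOn (cayley ∘ exp) {w : ℂ | |w.im| < π / 2} := by
  have hstrip : {w : ℂ | |w.im| < π / 2} ⊆ im ⁻¹' Ioc (-π) π := fun w (hw : |w.im| < π / 2) => by
    have := abs_lt.1 hw
    constructor <;> linarith [Real.pi_pos]
  exact (cayley_injOn.comp (injOn_exp_im_mem_Ioc.mono hstrip) fun w hw => one_add_exp_ne_zero hw)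

lemma differentiableAt_cayley_exp {w : ℂ} (hw : |w.im| < π / 2) :
    DifferentiableAt ℂ (cayley ∘ exp) w :=
  (differentiableAt_cayley (one_add_exp_ne_zero hw)).comp w differentiableAt_exp

lemma tendsto_exp_ofReal_mul_nhds_zero {α : Type*} {l : Filter α} {φ g : α → ℂ} {τ : ℝ}
    (hτ : 0 < τ) (hφ : Tendsto φ l (𝓝 0)) (hg : ∀ᶠ x in l, exp (g x) = φ x) :
    Tendsto (fun x => exp (τ * g x)) l (𝓝 0) := by
  rw [tendsto_zero_iff_norm_tendsto_zero]
  have h : Tendsto (fun x => ‖φ x‖ ^ τ) l (𝓝 0) := by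
    simpa [Function.comp_def, Real.zero_rpow hτ.ne'] using
      (Real.continuousAt_rpow_const 0 τ (Or.inr hτ.le)).tendsto.comp (norm_zero (E := ℂ) ▸ hφ.norm)
  refine h.congr' (hg.mono fun x hx => ?_)
  dsimp only
  rw [← hx, norm_exp, norm_exp, re_ofReal_mul, mul_comm τ, Real.exp_mul]

lemma tendsto_cayley_exp_ofReal_mul_nhds_one {α : Type*} {l : Filter α} {φ g : α → ℂ} {τ : ℝ}
    (hτ : 0 < τ) (hφ : Tendsto φ l (𝓝 0)) (hg : ∀ᶠ x in l, exp (g x) = φ x) :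
    Tendsto (fun x => cayley (exp (τ * g x))) l (𝓝 1) := by
  have h := (differentiableAt_cayley (t := 0) (by norm_num)).continuousAt.tendsto.comp
    (tendsto_exp_ofReal_mul_nhds_zero hτ hφ hg)
  rwa [show cayley 0 = 1 by simp [cayley]] at h

lemma tendsto_cayley_exp_ofReal_mul_nhds_neg_one {α : Type*} {l : Filter α} {φ g : α → ℂ}
    {τ : ℝ} (hτ : 0 < τ) (hφ : Tendsto (fun x => (φ x)⁻¹) l (𝓝 0))
    (hg : ∀ᶠ x in l, exp (g x) = φ x) :
    Tendsto (fun x => cayley (exp (τ * g x))) l (𝓝 (-1)) := by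
  have h := (tendsto_cayley_exp_ofReal_mul_nhds_one hτ hφ
    (g := fun x => -g x) (hg.mono fun x hx => by rw [exp_neg, hx])).neg
  refine h.congr fun x => ?_
  rw [mul_neg, exp_neg, cayley_inv (exp_ne_zero _), neg_neg]

structure IsLogOn (K : Set ℂ) (φ g : ℂ → ℂ) : Prop where
  continuousOn : ContinuousOn g K
  differentiableOn : DifferentiableOn ℂ g (interior K)
  bdd_im : ∃ B, ∀ z ∈ K, |(g z).im| ≤ B
  exp_eq : ∀ z ∈ K, exp (g z) = φ z

namespace IsLogOn

variable {K L : Set ℂ} {φ ψ g h : ℂ → ℂ} {τ : ℝ}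

lemma mono (hg : IsLogOn K φ g) (hLK : L ⊆ K) : IsLogOn L φ g where
  continuousOn := hg.continuousOn.mono hLK
  differentiableOn := hg.differentiableOn.mono (interior_mono hLK)
  bdd_im := let ⟨B, hB⟩ := hg.bdd_im; ⟨B, fun z hz => hB z (hLK hz)⟩
  exp_eq z hz := hg.exp_eq z (hLK hz)

lemma congr (hg : IsLogOn K φ g) (hφψ : EqOn φ ψ K) : IsLogOn K ψ g :=
  { hg with exp_eq := fun z hz => (hg.exp_eq z hz).trans (hφψ hz) }

lemma mul (hg : IsLogOn K φ g) (hh : IsLogOn K ψ h) : IsLogOn K (φ * ψ) (g + h) where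
  continuousOn := hg.continuousOn.add hh.continuousOn
  differentiableOn := hg.differentiableOn.add hh.differentiableOn
  bdd_im := by
    obtain ⟨B, hB⟩ := hg.bdd_im
    obtain ⟨C, hC⟩ := hh.bdd_im
    refine ⟨B + C, fun z hz => ?_⟩
    simpa only [Pi.add_apply, add_im] using
      (abs_add_le _ _).trans (add_le_add (hB z hz) (hC z hz))
  exp_eq z hz := by simp only [Pi.add_apply, Pi.mul_apply, exp_add, hg.exp_eq z hz, hh.exp_eq z hz]

lemma div (hg : IsLogOn K φ g) (hh : IsLogOn K ψ h) : IsLogOn K (φ / ψ) (g - h) where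
  continuousOn := hg.continuousOn.sub hh.continuousOn
  differentiableOn := hg.differentiableOn.sub hh.differentiableOn
  bdd_im := by
    obtain ⟨B, hB⟩ := hg.bdd_im
    obtain ⟨C, hC⟩ := hh.bdd_im
    refine ⟨B + C, fun z hz => ?_⟩
    simpa only [Pi.sub_apply, sub_im] using
      (abs_sub _ _).trans (add_le_add (hB z hz) (hC z hz))
  exp_eq z hz := by simp only [Pi.sub_apply, Pi.div_apply, exp_sub, hg.exp_eq z hz, hh.exp_eq z hz]

lemma injOn (hg : IsLogOn K φ g) (hφ : InjOn φ K) : InjOn g K :=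
  fun x hx y hy h => hφ hx hy (by rw [← hg.exp_eq x hx, ← hg.exp_eq y hy, h])

lemma exists_pos_abs_im_mul_lt (hg : IsLogOn K φ g) {ε : ℝ}
    (hε : 0 < ε) : ∃ τ : ℝ, 0 < τ ∧ ∀ z ∈ K, |((τ : ℂ) * g z).im| < ε := by
  obtain ⟨B, hB⟩ := hg.bdd_im
  refine ⟨ε / (|B| + 1), by positivity, fun z hz => ?_⟩
  rw [im_ofReal_mul, abs_mul, abs_of_pos (by positivity), div_mul_eq_mul_div,
    div_lt_iff₀ (by positivity)]
  nlinarith [hB z hz, le_abs_self B]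

lemma continuousOn_cayley_exp (hg : IsLogOn K φ g)
    (hτg : ∀ z ∈ K, |((τ : ℂ) * g z).im| < π / 2) :
    ContinuousOn (fun z => cayley (exp (τ * g z))) K := fun z hz =>
  (differentiableAt_cayley_exp (hτg z hz)).continuousAt.comp_continuousWithinAt
    (f := fun z => (τ : ℂ) * g z) ((continuousOn_const.mul hg.continuousOn) z hz)

lemma differentiableOn_cayley_exp (hg : IsLogOn K φ g)
    (hτg : ∀ z ∈ K, |((τ : ℂ) * g z).im| < π / 2) :
    DifferentiableOn ℂ (fun z => cayley (exp (τ * g z))) (interior K) := fun z hz =>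
  (differentiableAt_cayley_exp (hτg z (interior_subset hz))).comp_differentiableWithinAt z
    (f := fun z => (τ : ℂ) * g z) ((hg.differentiableOn.const_mul (τ : ℂ)) z hz)

lemma injOn_cayley_exp (hg : IsLogOn K φ g) (hφ : InjOn φ K) (hτ : τ ≠ 0)
    (hτg : ∀ z ∈ K, |((τ : ℂ) * g z).im| < π / 2) :
    InjOn (fun z => cayley (exp (τ * g z))) K :=
  _root_.injOn_cayley_exp.comp ((mul_right_injective₀ (ofReal_ne_zero.2 hτ)).comp_injOn
    (hg.injOn hφ)) hτg

end IsLogOn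

lemma isLogOn_log_comp {K : Set ℂ} {φ : ℂ → ℂ} (hc : ContinuousOn φ K)
    (hd : DifferentiableOn ℂ φ (interior K)) (hs : MapsTo φ K slitPlane) :
    IsLogOn K φ (log ∘ φ) where
  continuousOn z hz := (hc z hz).clog (hs hz)
  differentiableOn z hz := (hd z hz).clog (hs (interior_subset hz))
  bdd_im := ⟨π, fun z _ => by rw [Function.comp_apply, log_im]; exact abs_arg_le_pi _⟩
  exp_eq z hz := exp_log (slitPlane_ne_zero (hs hz))

lemma IsLogOn.exists_sub_of_dist_lt {K : Set ℂ} {g : ℂ → ℂ} {c w : ℂ} (hg : IsLogOn K (· - c) g)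
    (hK : ∀ z ∈ K, dist w c < dist z c) : ∃ g', IsLogOn K (· - w) g' := by
  have hc : ∀ z ∈ K, z - c ≠ 0 := fun z hz =>
    sub_ne_zero.2 (dist_pos.1 (dist_nonneg.trans_lt (hK z hz)))
  have hq : IsLogOn K (fun z => (z - w) / (z - c)) _ :=
    isLogOn_log_comp
      ((continuousOn_id.sub continuousOn_const).div (continuousOn_id.sub continuousOn_const) hc)
      ((differentiableOn_id.sub (differentiableOn_const _)).div
        (differentiableOn_id.sub (differentiableOn_const _)) fun z hz => hc z (interior_subset hz))
      fun z hz => sub_div_sub_mem_slitPlane (hK z hz)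
  exact ⟨_, (hg.mul hq).congr fun z hz => mul_div_cancel₀ _ (hc z hz)⟩

lemma exists_isLogOn_sub {K : Set ℂ} (hK : IsCompact K) (hKc : IsPreconnected Kᶜ) {a : ℂ}
    (ha : a ∉ K) : ∃ g, IsLogOn K (· - a) g := by
  obtain ⟨m, hm⟩ := hK.bddBelow_image continuous_re.continuousOn
  have hb : MapsTo (· - ((m - 1 : ℝ) : ℂ)) K slitPlane := fun z hz =>
    Or.inl (by simp only [sub_re, ofReal_re]; linarith [hm (mem_image_of_mem re hz)])
  have hbK : ((m - 1 : ℝ) : ℂ) ∉ K := fun h => by simpa using hb h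
  refine hKc.induction₂' (fun b b' => (∃ g, IsLogOn K (· - b) g) → ∃ g, IsLogOn K (· - b') g)
    ?_ (fun _ _ _ _ _ _ h h' => h' ∘ h) hbK ha
    ⟨_, isLogOn_log_comp (by fun_prop) (by fun_prop) hb⟩
  intro b hb
  obtain ⟨ε, hε, hεK⟩ := Metric.isOpen_iff.1 hK.isClosed.isOpen_compl b hb
  have hfar : ∀ z ∈ K, ε ≤ dist z b := fun z hz => not_lt.1 fun h => hεK (mem_ball.2 h) hz
  filter_upwards [nhdsWithin_le_nhds (ball_mem_nhds b (half_pos hε))] with b' hb'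
  rw [mem_ball] at hb'
  refine ⟨fun ⟨g, hg⟩ => hg.exists_sub_of_dist_lt fun z hz => ?_,
    fun ⟨g, hg⟩ => hg.exists_sub_of_dist_lt fun z hz => ?_⟩
  · linarith [hfar z hz]
  · linarith [hfar z hz, dist_triangle z b' b, dist_comm b b']

lemma center_notMem_of_closedBall_inter_eq_singleton {X : Type*} [PseudoMetricSpace X]
    {K : Set X} {c w : X} {r : ℝ} (hr : 0 < r) (hw : w ∉ interior K)
    (hwI : ∀ U : Set X, IsOpen U → w ∈ U → (U ∩ interior K).Nonempty)
    (hcw : closedBall c r ∩ K = {w}) : c ∉ K := by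
  intro hc
  have hcw' : c = w := (hcw ▸ ⟨mem_closedBall_self hr.le, hc⟩ : c ∈ ({w} : Set X))
  obtain ⟨p, hp, hpK⟩ := hwI (ball c r) isOpen_ball (hcw' ▸ mem_ball_self hr)
  have hpw : p = w := (hcw ▸ ⟨ball_subset_closedBall hp, interior_subset hpK⟩ : p ∈ ({w} : Set X))
  exact hw (hpw ▸ hpK)

lemma exists_isLogOn_sub_diff_singleton {K : Set ℂ} (hK : IsCompact K) (hKc : IsPreconnected Kᶜ)
    {c w : ℂ} {r : ℝ} (hc : c ∉ K) (hcw : closedBall c r ∩ K = {w}) :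
    ∃ g, IsLogOn (K \ {w}) (· - w) g := by
  obtain ⟨g, hg⟩ := exists_isLogOn_sub hK hKc hc
  refine (hg.mono sdiff_subset).exists_sub_of_dist_lt fun z ⟨hzK, hzw⟩ => ?_
  have hw : w ∈ closedBall c r ∩ K := hcw ▸ rfl
  have hz : z ∉ closedBall c r := fun h => hzw (hcw ▸ ⟨h, hzK⟩)
  exact (mem_closedBall.1 hw.1).trans_lt (not_le.1 hz)

lemma continuousOn_ite_pair {X Y : Type*} [TopologicalSpace X] [T1Space X] [TopologicalSpace Y]
    [DecidableEq X] {K : Set X} {a b : X} {F : X → Y} {u v : Y}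
    (hF : ContinuousOn F (K \ {a, b})) (ha : Tendsto F (𝓝[K \ {a, b}] a) (𝓝 u))
    (hb : Tendsto F (𝓝[K \ {a, b}] b) (𝓝 v)) :
    ContinuousOn (fun z => if z = a then u else if z = b then v else F z) K := by
  intro z hz
  rw [← continuousWithinAt_sdiff_singleton (y := a), ← continuousWithinAt_sdiff_singleton (y := b),
    sdiff_sdiff, singleton_union]
  have hfF : EqOn (fun z => if z = a then u else if z = b then v else F z) F (K \ {a, b}) :=
    fun z hz => by simp_all
  by_cases hza : z = a
  · subst hza
    simpa [ContinuousWithinAt] using ha.congr' (eventuallyEq_nhdsWithin_of_eqOn hfF).symm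
  by_cases hzb : z = b
  · subst hzb
    simpa [ContinuousWithinAt, hza] using hb.congr' (eventuallyEq_nhdsWithin_of_eqOn hfF).symm
  exact (hF z ⟨hz, by simp [hza, hzb]⟩).congr hfF (hfF ⟨hz, by simp [hza, hzb]⟩)

lemma injOn_of_injOn_sdiff_pair {X Y : Type*} {f : X → Y} {K : Set X} {a b : X}
    (hf : InjOn f (K \ {a, b})) (hab : f a ≠ f b) (ha : f a ∉ f '' (K \ {a, b}))
    (hb : f b ∉ f '' (K \ {a, b})) : InjOn f K := by
  by_cases hab' : a = b
  · exact absurd (congrArg f hab') hab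
  have hK : K ⊆ insert a (insert b (K \ {a, b})) := fun z hz => by
    by_cases hza : z = a <;> by_cases hzb : z = b <;> simp_all
  refine InjOn.mono hK ((injOn_insert (by simp [hab'])).2 ⟨(injOn_insert (by simp)).2 ⟨hf, hb⟩, ?_⟩)
  rintro ⟨z, hz | hz, hfz⟩
  · exact hab (hz ▸ hfz).symm
  · exact ha ⟨z, hz, hfz⟩

theorem exists_pm_one_extension {K : Set ℂ} {a b : ℂ} {F : ℂ → ℂ} (hab : a ≠ b) (ha : a ∈ K)
    (hint : interior K ⊆ K \ {a, b}) (hFc : ContinuousOn F (K \ {a, b}))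
    (hFd : DifferentiableOn ℂ F (interior K)) (hFi : InjOn F (K \ {a, b}))
    (hF_ball : MapsTo F (K \ {a, b}) (ball 0 1)) (hFa : Tendsto F (𝓝[K \ {a, b}] a) (𝓝 1))
    (hFb : Tendsto F (𝓝[K \ {a, b}] b) (𝓝 (-1))) :
    ∃ f : ℂ → ℂ, ContinuousOn f K ∧ DifferentiableOn ℂ f (interior K) ∧
      sSup ((fun w => ‖f w‖) '' K) = 1 ∧ InjOn f K ∧ f a = 1 ∧ f b = -1 ∧
      f '' (K \ {a, b}) ⊆ ball (0 : ℂ) 1 := by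
  set f : ℂ → ℂ := fun z => if z = a then 1 else if z = b then -1 else F z
  have hfF : EqOn f F (K \ {a, b}) := fun z hz => by simp_all [f]
  have hfa : f a = 1 := if_pos rfl
  have hfb : f b = -1 := by simp [f, hab.symm]
  have hf_ball : f '' (K \ {a, b}) ⊆ ball 0 1 := hfF.image_eq ▸ hF_ball.image_subset
  have hf_le : ∀ z ∈ K, ‖f z‖ ≤ 1 := fun z hz => by
    by_cases hzab : z ∈ K \ {a, b}
    · exact (mem_ball_zero_iff.1 (hf_ball ⟨z, hzab, rfl⟩)).le
    · obtain rfl | rfl : z = a ∨ z = b := by_contra fun h => hzab ⟨hz, h⟩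
      · simp [hfa]
      · simp [hfb]
  refine ⟨f, continuousOn_ite_pair hFc hFa hFb, hFd.congr fun z hz => hfF (hint hz), ?_, ?_,
    hfa, hfb, hf_ball⟩
  · exact IsGreatest.csSup_eq ⟨⟨a, ha, by simp [hfa]⟩, by rintro _ ⟨z, hz, rfl⟩; exact hf_le z hz⟩
  · refine injOn_of_injOn_sdiff_pair (hFi.congr hfF.symm) (by norm_num [hfa, hfb]) ?_ ?_
    · exact fun h => by simpa [hfa] using hf_ball h
    · exact fun h => by simpa [hfb] using hf_ball h

theorem exists_injOn_pm_one_of_isLogOn_sub_div_sub {K : Set ℂ} {a b : ℂ} {g : ℂ → ℂ}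
    (hab : a ≠ b) (ha : a ∈ K) (ha' : a ∉ interior K) (hb' : b ∉ interior K)
    (hg : IsLogOn (K \ {a, b}) (fun z => (z - a) / (z - b)) g) :
    ∃ f : ℂ → ℂ, ContinuousOn f K ∧ DifferentiableOn ℂ f (interior K) ∧
      sSup ((fun w => ‖f w‖) '' K) = 1 ∧ InjOn f K ∧ f a = 1 ∧ f b = -1 ∧
      f '' (K \ {a, b}) ⊆ ball (0 : ℂ) 1 := by
  obtain ⟨τ, hτ, hτg⟩ := hg.exists_pos_abs_im_mul_lt (half_pos Real.pi_pos)
  have hint : interior K ⊆ K \ {a, b} := fun z hz =>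
    ⟨interior_subset hz, by rintro (rfl | rfl) <;> contradiction⟩
  refine exists_pm_one_extension hab ha hint (hg.continuousOn_cayley_exp hτg)
    ((hg.differentiableOn_cayley_exp hτg).mono (interior_maximal hint isOpen_interior))
    (hg.injOn_cayley_exp ((injOn_sub_div_sub hab).mono fun z hz h => hz.2 (Or.inr h)) hτ.ne' hτg)
    (fun z hz => mem_ball_zero_iff.2 (norm_cayley_lt_one (re_exp_pos (hτg z hz))))
    (tendsto_cayley_exp_ofReal_mul_nhds_one hτ
      (tendsto_nhdsWithin_of_tendsto_nhds (tendsto_sub_div_sub_nhds_zero hab))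
      (eventually_nhdsWithin_of_forall hg.exp_eq))
    (tendsto_cayley_exp_ofReal_mul_nhds_neg_one hτ ?_ (eventually_nhdsWithin_of_forall hg.exp_eq))
  simpa only [inv_div] using
    tendsto_nhdsWithin_of_tendsto_nhds (tendsto_sub_div_sub_nhds_zero hab.symm)

theorem exists_conformal_homeomorphism_pm_one_general (K : Set ℂ) (hK : IsCompact K)
    (hKc : IsConnected Kᶜ)
    (z₁ z₂ : ℂ) (hne : z₁ ≠ z₂)
    (hz₁ : z₁ ∈ frontier K) (hz₂ : z₂ ∈ frontier K)
    (hz₁I : ∀ U : Set ℂ, IsOpen U → z₁ ∈ U → (U ∩ interior K).Nonempty)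
    (hz₂I : ∀ U : Set ℂ, IsOpen U → z₂ ∈ U → (U ∩ interior K).Nonempty)
    (hca₁ : ∃ c : ℂ, ∃ r : ℝ, 0 < r ∧ Metric.closedBall c r ∩ K = {z₁})
    (hca₂ : ∃ c : ℂ, ∃ r : ℝ, 0 < r ∧ Metric.closedBall c r ∩ K = {z₂}) :
    ∃ f : ℂ → ℂ, ContinuousOn f K ∧ DifferentiableOn ℂ f (interior K) ∧
      sSup ((fun w => ‖f w‖) '' K) = 1 ∧
      Set.InjOn f K ∧
      f z₁ = 1 ∧ f z₂ = -1 ∧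
      f '' (K \ {z₁, z₂}) ⊆ Metric.ball (0 : ℂ) 1 := by
  obtain ⟨c₁, r₁, hr₁, hc₁⟩ := hca₁
  obtain ⟨c₂, r₂, hr₂, hc₂⟩ := hca₂
  obtain ⟨g₁, hg₁⟩ := exists_isLogOn_sub_diff_singleton hK hKc.isPreconnected
    (center_notMem_of_closedBall_inter_eq_singleton hr₁ hz₁.2 hz₁I hc₁) hc₁
  obtain ⟨g₂, hg₂⟩ := exists_isLogOn_sub_diff_singleton hK hKc.isPreconnected
    (center_notMem_of_closedBall_inter_eq_singleton hr₂ hz₂.2 hz₂I hc₂) hc₂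
  have hg : IsLogOn (K \ {z₁, z₂}) (fun z => (z - z₁) / (z - z₂)) (g₁ - g₂) :=
    (hg₁.mono (sdiff_subset_sdiff_right (by simp))).div
      (hg₂.mono (sdiff_subset_sdiff_right (by simp)))
  exact exists_injOn_pm_one_of_isLogOn_sub_div_sub hne (hK.isClosed.frontier_subset hz₁) hz₁.2
    hz₂.2 hg

/-- Existence of a norm-one conformal homeomorphism in `A(K)` mapping `z₁` to
`1`, `z₂` to `-1`, and the rest of `K` into the open unit disk. -/
theorem exists_conformal_homeomorphism_pm_one (K : Set ℂ) (hK : IsCompact K)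
    (hKc : IsConnected Kᶜ) (hint : (interior K).Nonempty)
    (z₁ z₂ : ℂ) (hne : z₁ ≠ z₂)
    (hz₁ : z₁ ∈ frontier K) (hz₂ : z₂ ∈ frontier K)
    (hz₁I : ∀ U : Set ℂ, IsOpen U → z₁ ∈ U → (U ∩ interior K).Nonempty)
    (hz₂I : ∀ U : Set ℂ, IsOpen U → z₂ ∈ U → (U ∩ interior K).Nonempty)
    (hca₁ : ∃ c : ℂ, ∃ r : ℝ, 0 < r ∧ Metric.closedBall c r ∩ K = {z₁})
    (hca₂ : ∃ c : ℂ, ∃ r : ℝ, 0 < r ∧ Metric.closedBall c r ∩ K = {z₂}) :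
    ∃ f : ℂ → ℂ, ContinuousOn f K ∧ DifferentiableOn ℂ f (interior K) ∧
      sSup ((fun w => ‖f w‖) '' K) = 1 ∧
      Set.InjOn f K ∧
      f z₁ = 1 ∧ f z₂ = -1 ∧
      f '' (K \ {z₁, z₂}) ⊆ Metric.ball (0 : ℂ) 1 :=
  exists_conformal_homeomorphism_pm_one_general K hK hKc z₁ z₂ hne hz₁ hz₂ hz₁I hz₂I hca₁ hca₂
end

section
/- Let K be a compact subset of ℂ. The set of circularly accessible boundary points of K is dense in ∂K; that is, for every z ∈ ∂K and every δ > 0 there exists a point z' ∈ ∂K with |z − z'| < δ such that there exist c ∈ ℂ and r > 0 with the closed disk {u ∈ ℂ : |u − c| ≤ r} intersecting K exactly in {z'}. -/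
/-!
Pick a point `c ∉ K` close to `z ∈ ∂K` and a point `z' ∈ K` nearest to `c`. The open ball about
`c` of radius `dist c z'` misses `K`, so `z'` lies on `∂K`, and by strict convexity the closed ball
with diameter `[c, z']` touches the complement of that open ball only at `z'`. Finally
`dist z z' ≤ dist z c + dist c z' ≤ 2 dist z c`.
-/

open Metric

section StrictConvex

variable {V P : Type*} [NormedAddCommGroup V] [NormedSpace ℝ V] [StrictConvexSpace ℝ V]
  [MetricSpace P] [NormedAddTorsor V P]

theorem closedBall_midpoint_inter_compl_ball (c z : P) :
    closedBall (midpoint ℝ c z) (dist c z / 2) ∩ (ball c (dist c z))ᶜ = {z} := by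
  have hc : dist c (midpoint ℝ c z) = dist c z / 2 := by
    rw [dist_left_midpoint, Real.norm_two, inv_mul_eq_div]
  refine Set.eq_singleton_iff_unique_mem.mpr ⟨⟨?_, by simp [dist_comm]⟩, ?_⟩
  · rw [mem_closedBall, dist_right_midpoint, Real.norm_two, inv_mul_eq_div, dist_comm]
  rintro u ⟨hu, hu'⟩
  rw [mem_closedBall, dist_comm] at hu
  rw [Set.mem_compl_iff, mem_ball, not_lt, dist_comm u c] at hu'
  have hcu : dist c u = dist c z :=
    le_antisymm (by linarith [dist_triangle c (midpoint ℝ c z) u]) hu'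
  have hmid : midpoint ℝ c z = midpoint ℝ c u :=
    eq_midpoint_of_dist_eq_half (by rw [hc, hcu])
      (by linarith [dist_triangle c (midpoint ℝ c z) u])
  rw [midpoint_eq_iff, AffineEquiv.pointReflection_midpoint_left] at hmid
  exact hmid

theorem closedBall_midpoint_inter_eq_singleton {K : Set P} {c z : P} (hz : z ∈ K)
    (hK : Disjoint (ball c (dist c z)) K) :
    closedBall (midpoint ℝ c z) (dist c z / 2) ∩ K = {z} := by
  refine subset_antisymm ?_ (Set.singleton_subset_iff.mpr ⟨?_, hz⟩)
  · rw [← closedBall_midpoint_inter_compl_ball c z]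
    exact Set.inter_subset_inter_right _ hK.subset_compl_left
  · exact ((closedBall_midpoint_inter_compl_ball c z).ge rfl).1

end StrictConvex

section NormedSpace

variable {E : Type*} [NormedAddCommGroup E] [NormedSpace ℝ E]

theorem mem_frontier_of_disjoint_ball {K : Set E} {c z : E} (hz : z ∈ K) (hcz : c ≠ z)
    (hK : Disjoint (ball c (dist c z)) K) : z ∈ frontier K := by
  rw [frontier_eq_closure_inter_closure]
  refine ⟨subset_closure hz, closure_mono hK.subset_compl_right ?_⟩
  rw [closure_ball c (dist_ne_zero.mpr hcz)]
  exact mem_closedBall.mpr (dist_comm z c).le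

def IsCircularlyAccessible (K : Set E) (z : E) : Prop :=
  ∃ c : E, ∃ r : ℝ, 0 < r ∧ closedBall c r ∩ K = {z}

theorem IsClosed.exists_mem_frontier_isCircularlyAccessible [ProperSpace E]
    [StrictConvexSpace ℝ E] {K : Set E} (hK : IsClosed K) {c z : E} (hc : c ∉ K) (hz : z ∈ K) :
    ∃ z' ∈ frontier K, dist c z' ≤ dist c z ∧ IsCircularlyAccessible K z' := by
  obtain ⟨z', hz'K, hnearest⟩ := hK.exists_infDist_eq_dist ⟨z, hz⟩ c
  have hdisj : Disjoint (ball c (dist c z')) K := hnearest ▸ disjoint_ball_infDist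
  have hcz' : c ≠ z' := fun h => hc (h ▸ hz'K)
  refine ⟨z', mem_frontier_of_disjoint_ball hz'K hcz' hdisj,
    hnearest ▸ infDist_le_dist_of_mem hz, midpoint ℝ c z', dist c z' / 2,
    half_pos (dist_pos.mpr hcz'), closedBall_midpoint_inter_eq_singleton hz'K hdisj⟩

end NormedSpace

/-- The circularly accessible boundary points of a compact `K ⊆ ℂ` are dense in
`∂K`. -/
theorem circularly_accessible_dense (K : Set ℂ) (hK : IsCompact K) :
    ∀ z ∈ frontier K, ∀ δ : ℝ, 0 < δ →
      ∃ z' ∈ frontier K, ‖z - z'‖ < δ ∧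
        ∃ c : ℂ, ∃ r : ℝ, 0 < r ∧ Metric.closedBall c r ∩ K = {z'} := by
  intro z hz δ hδ
  have hzc : z ∈ closure Kᶜ := frontier_subset_closure (by rwa [frontier_compl])
  obtain ⟨c, hc, hzc_dist⟩ := mem_closure_iff.mp hzc (δ / 2) (half_pos hδ)
  obtain ⟨z', hz', hcloser, hacc⟩ :=
    hK.isClosed.exists_mem_frontier_isCircularlyAccessible hc (hK.isClosed.frontier_subset hz)
  refine ⟨z', hz', ?_, hacc⟩
  rw [← dist_eq_norm]
  linarith [dist_triangle z c z', dist_comm z c]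
end

section
/- Let X be a set, let x, y ∈ X, and let (U₁, …, Uₙ) be a finite sequence of subsets of X with x ∈ U₁, y ∈ Uₙ, and Uᵢ ∩ Uᵢ₊₁ ≠ ∅ for i = 1, …, n − 1 (a weak chain linking x to y). Then there exist k ≥ 1 and indices 1 = i₁ < i₂ < … < i_k = n such that the subsequence (U_{i₁}, …, U_{i_k}) is a simple chain linking x to y: x ∈ U_{i₁}, y ∈ U_{i_k}, and for all a, b ∈ {1, …, k}, U_{i_a} ∩ U_{i_b} ≠ ∅ if and only if |a − b| ≤ 1. -/
/-- Every weak chain linking `x` to `y` contains a subsequence that is a simple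
chain linking `x` to `y`. -/
theorem weak_chain_has_simple_subchain (X : Type*) (x y : X) (n : ℕ)
    (hn : 1 ≤ n) (U : ℕ → Set X) (hx : x ∈ U 1) (hy : y ∈ U n)
    (hchain : ∀ i, 1 ≤ i → i < n → (U i ∩ U (i + 1)).Nonempty) :
    ∃ k : ℕ, 1 ≤ k ∧ ∃ idx : ℕ → ℕ,
      idx 1 = 1 ∧ idx k = n ∧
      (∀ a, 1 ≤ a → a < k → idx a < idx (a + 1)) ∧
      (∀ a b, 1 ≤ a → a ≤ k → 1 ≤ b → b ≤ k →
        ((U (idx a) ∩ U (idx b)).Nonempty ↔ (a ≤ b + 1 ∧ b ≤ a + 1))) := by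
  classical
  -- weak subchains of length k
  have hex : ∃ k : ℕ, 1 ≤ k ∧ ∃ idx : ℕ → ℕ,
      idx 1 = 1 ∧ idx k = n ∧
      (∀ a, 1 ≤ a → a < k → idx a < idx (a + 1)) ∧
      (∀ a, 1 ≤ a → a < k → (U (idx a) ∩ U (idx (a + 1))).Nonempty) :=
    ⟨n, hn, id, rfl, rfl, fun a _ _ => Nat.lt_succ_self a,
      fun a ha hak => hchain a ha hak⟩
  obtain ⟨hk1, idx, h1, hkn, hmono, hcons⟩ := Nat.find_spec hex
  set k := Nat.find hex with hkdef
  -- strict monotonicity on [1, k]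
  have mono : ∀ a b, 1 ≤ a → a < b → b ≤ k → idx a < idx b := by
    intro a b ha hab hbk
    induction b with
    | zero => omega
    | succ b ih =>
      rcases Nat.lt_or_ge a b with h | h
      · exact (ih h (by omega)).trans (hmono b (by omega) (by omega))
      · have : a = b := by omega
        subst this
        exact hmono a ha (by omega)
  -- no shortcuts
  have key : ∀ a b, 1 ≤ a → a < b → b ≤ k →
      (U (idx a) ∩ U (idx b)).Nonempty → b ≤ a + 1 := by
    intro a b ha hab hbk hne
    by_contra hcon
    have hb2 : a + 2 ≤ b := by omega
    set d := b - a - 1 with hd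
    have hd1 : 1 ≤ d := by omega
    set k' := k - d with hk'
    have hak' : a + 1 ≤ k' := by omega
    have hk'k : k' < k := by omega
    have habd : a + 1 + d = b := by omega
    have hkd : k' + d = k := by omega
    refine Nat.find_min hex hk'k ⟨by omega,
      fun j => if j ≤ a then idx j else idx (j + d), ?_, ?_, ?_, ?_⟩
    · simp [ha, h1]
    · have : ¬ (k' ≤ a) := by omega
      simp only [this, if_false, hkd, hkn]
    · intro j hj hjk'
      rcases Nat.lt_or_ge j a with h | h
      · have h1' : j ≤ a := by omega
        have h2' : j + 1 ≤ a := by omega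
        simp only [h1', h2', if_true]
        exact hmono j hj (by omega)
      · rcases Nat.lt_or_ge a j with h' | h'
        · have h1' : ¬ (j ≤ a) := by omega
          have h2' : ¬ (j + 1 ≤ a) := by omega
          simp only [h1', h2', if_false]
          have : j + 1 + d = (j + d) + 1 := by omega
          rw [this]
          exact hmono (j + d) (by omega) (by omega)
        · have : j = a := by omega
          subst this
          have h2' : ¬ (j + 1 ≤ j) := by omega
          simp only [le_refl, if_true, h2', if_false, habd]
          exact mono j b hj hab hbk
    · intro j hj hjk'
      rcases Nat.lt_or_ge j a with h | h
      · have h1' : j ≤ a := by omega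
        have h2' : j + 1 ≤ a := by omega
        simp only [h1', h2', if_true]
        exact hcons j hj (by omega)
      · rcases Nat.lt_or_ge a j with h' | h'
        · have h1' : ¬ (j ≤ a) := by omega
          have h2' : ¬ (j + 1 ≤ a) := by omega
          simp only [h1', h2', if_false]
          have : j + 1 + d = (j + d) + 1 := by omega
          rw [this]
          exact hcons (j + d) (by omega) (by omega)
        · have : j = a := by omega
          subst this
          have h2' : ¬ (j + 1 ≤ j) := by omega
          simp only [le_refl, if_true, h2', if_false, habd]
          exact hne
  refine ⟨k, hk1, idx, h1, hkn, hmono, ?_⟩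
  intro a b ha hak hb hbk
  constructor
  · intro hne
    rcases Nat.lt_trichotomy a b with h | h | h
    · exact ⟨by omega, key a b ha h hbk hne⟩
    · omega
    · have := key b a hb h hak (by rwa [Set.inter_comm])
      exact ⟨this, by omega⟩
  · rintro ⟨hab1, hba1⟩
    rcases Nat.lt_trichotomy a b with h | h | h
    · have : b = a + 1 := by omega
      subst this
      exact hcons a ha (by omega)
    · have hne : (U (idx a)).Nonempty := by
        rcases Nat.lt_or_ge a k with h' | h'
        · obtain ⟨z, hz, _⟩ := hcons a ha h'
          exact ⟨z, hz⟩
        · rcases Nat.lt_or_ge 1 a with h2 | h2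
          · obtain ⟨z, _, hz⟩ := hcons (a - 1) (by omega) (by omega)
            rw [Nat.sub_add_cancel (by omega)] at hz
            exact ⟨z, hz⟩
          · have ha1 : a = 1 := by omega
            rw [ha1, h1]
            exact ⟨x, hx⟩
      obtain ⟨z, hz⟩ := hne
      rw [← h]
      exact ⟨z, hz, hz⟩
    · have : a = b + 1 := by omega
      subst this
      rw [Set.inter_comm]
      exact hcons b hb (by omega)
end

section
/- For every α with 0 < α < 1 and every θ with 0 < θ < π/2, one has (cos θ)^α < cos(αθ), where (cos θ)^α denotes the real power of the positive real number cos θ. Consequently, the image of the circle {z : |z − 1/2| = 1/2} under the principal α-th power map z ↦ z^α is contained in {0, 1} ∪ ({w : |arg w| < απ/2} ∩ {w : |w − 1/2| < 1/2}). -/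
/-!
Weighted AM–GM gives `(cos θ)^α ≤ α cos θ + (1 - α) cos 0`, and strict concavity of `cos` on
`[-π/2, π/2]` makes the right side smaller than `cos (αθ)`. Writing `z = r e^{iφ}`, the circle
`|z - 1/2| = 1/2` is the curve `r = cos φ` and the open disc is `r < cos φ`; for `z ≠ 0, 1` on
the circle, `z^α = (cos φ)^α e^{iαφ}` and `(cos φ)^α < cos (αφ)` puts it inside the disc.
-/

open Complex Real Set

theorem Real.cos_rpow_lt_cos_mul {α θ : ℝ} (hα0 : 0 < α) (hα1 : α < 1)
    (hθ : θ ∈ Icc (-(π / 2)) (π / 2)) (hθ0 : θ ≠ 0) : cos θ ^ α < cos (α * θ) := by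
  have hcos : 0 ≤ cos θ := cos_nonneg_of_mem_Icc hθ
  have amgm : cos θ ^ α * 1 ^ (1 - α) ≤ α * cos θ + (1 - α) * 1 :=
    geom_mean_le_arith_mean2_weighted hα0.le (by linarith) hcos zero_le_one (by ring)
  have concave := strictConcaveOn_cos_Icc.2 hθ ⟨by linarith [pi_pos], by linarith [pi_pos]⟩ hθ0
    hα0 (by linarith : 0 < 1 - α) (by ring)
  simp only [smul_eq_mul, mul_zero, add_zero, cos_zero, mul_one, one_rpow] at amgm concave
  linarith

namespace Complex

theorem sq_norm_sub_half (z : ℂ) : ‖z - 1 / 2‖ ^ 2 = ‖z‖ * (‖z‖ - Real.cos (arg z)) + 1 / 4 := by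
  have hre : ‖z‖ * Real.cos (arg z) = z.re := norm_mul_cos_arg z
  rw [mul_sub, hre, ← sq, Complex.sq_norm, Complex.sq_norm, normSq_apply, normSq_apply]
  simp only [sub_re, sub_im, div_ofNat_re, div_ofNat_im, one_re, one_im]
  ring

theorem mem_sphere_half_iff {z : ℂ} :
    z ∈ Metric.sphere (1 / 2 : ℂ) (1 / 2) ↔ z = 0 ∨ ‖z‖ = Real.cos (arg z) := by
  rw [mem_sphere_iff_norm, ← sq_eq_sq₀ (norm_nonneg _) (by norm_num), sq_norm_sub_half,
    ← norm_eq_zero, ← sub_eq_zero (a := ‖z‖) (b := Real.cos _), ← mul_eq_zero]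
  constructor <;> intro h <;> linarith

theorem mem_ball_half_iff {z : ℂ} (hz : z ≠ 0) :
    z ∈ Metric.ball (1 / 2 : ℂ) (1 / 2) ↔ ‖z‖ < Real.cos (arg z) := by
  rw [mem_ball_iff_norm, ← sq_lt_sq₀ (norm_nonneg _) (by norm_num), sq_norm_sub_half,
    ← sub_pos (b := ‖z‖), ← mul_pos_iff_of_pos_left (norm_pos_iff.2 hz)]
  constructor <;> intro h <;> linarith

theorem arg_cpow_ofReal {z : ℂ} (hz : z ≠ 0) {y : ℝ} (hy : arg z * y ∈ Ioc (-π) π) :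
    arg (z ^ (y : ℂ)) = arg z * y := by
  rw [cpow_ofReal, ofReal_cos, ofReal_sin, arg_mul_cos_add_sin_mul_I (rpow_pos_of_pos (norm_pos_iff.2 hz) y) hy]

end Complex

/-- For `0 < α < 1` and `0 < θ < π/2` one has `(cos θ)^α < cos (αθ)`, and
consequently the image of the circle `|z - 1/2| = 1/2` under the principal
`α`-th power lies in `{0,1} ∪ ({|arg w| < απ/2} ∩ D(1/2;1/2))`. -/
theorem teardrop_lemma (α θ : ℝ) (hα0 : 0 < α) (hα1 : α < 1)
    (hθ0 : 0 < θ) (hθ : θ < Real.pi / 2) :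
    Real.cos θ ^ α < Real.cos (α * θ) ∧
    ∀ z ∈ Metric.sphere (1 / 2 : ℂ) (1 / 2),
      z ^ (α : ℂ) ∈
        ({0, 1} : Set ℂ) ∪
          ({w : ℂ | |Complex.arg w| < α * Real.pi / 2} ∩
            Metric.ball (1 / 2 : ℂ) (1 / 2)) := by
  refine ⟨cos_rpow_lt_cos_mul hα0 hα1 ⟨by linarith [pi_pos], hθ.le⟩ hθ0.ne', fun z hz => ?_⟩
  rcases eq_or_ne z 0 with rfl | hz0
  · exact .inl (.inl (zero_cpow (ofReal_ne_zero.2 hα0.ne')))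
  have hcircle : ‖z‖ = Real.cos (arg z) := (mem_sphere_half_iff.1 hz).resolve_left hz0
  have hz_pos : 0 < ‖z‖ := norm_pos_iff.2 hz0
  have harg : |arg z| < π / 2 := abs_arg_lt_pi_div_two_iff.2 <| .inl <| by
    rw [← norm_mul_cos_arg, ← hcircle]; positivity
  rcases eq_or_ne (arg z) 0 with harg0 | harg0
  · have hz1 : z = 1 := by
      rw [← norm_mul_exp_arg_mul_I z, hcircle, harg0]; simp
    exact .inl (.inr (by rw [hz1, one_cpow]; rfl))
  obtain ⟨harg_lo, harg_hi⟩ := abs_lt.1 harg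
  have hpow_arg : arg (z ^ (α : ℂ)) = arg z * α :=
    arg_cpow_ofReal hz0 ⟨by nlinarith [pi_pos], by nlinarith [pi_pos]⟩
  have hpow_ne : z ^ (α : ℂ) ≠ 0 := norm_pos_iff.1 (by rw [norm_cpow_real]; positivity)
  refine .inr ⟨?_, (mem_ball_half_iff hpow_ne).2 ?_⟩
  · change |arg (z ^ (α : ℂ))| < α * π / 2
    rw [hpow_arg, abs_mul, abs_of_pos hα0]
    nlinarith
  · rw [norm_cpow_real, hpow_arg, hcircle, mul_comm]
    exact cos_rpow_lt_cos_mul hα0 hα1 ⟨harg_lo.le, harg_hi.le⟩ harg0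
end
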